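/- arXiv:1206.1269 — 6 statements merged into one kernel-verified Lean document; each statement's English description precedes it below -/
import Mathlib

section
/- The graph E_2^n (the complete multipartite graph with n parts each of size 2, i.e., K_{2n} minus a perfect matching) is n-choosable: for every assignment of lists of size n to its vertices, there is a proper coloring choosing each vertex's color from its list. -/
/-!
Induction on the number of parts. If some part `{(i, 0), (i, 1)}` has a colour `x` in both
lists, colour both vertices with `x`, delete `x` from all other lists and recurse on the
remaining parts: each list loses at most one colour and there is one part fewer. Otherwise the
two lists of every part are disjoint and Hall's condition holds for all `2n` vertices: a set `S`
with `|S| ≤ n` sees any single list of size `n`, and a set with `|S| > n` contains a whole part,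
whose two lists already give `2n ≥ |S|` colours. A system of distinct representatives is then a
proper colouring.
-/

/-- `E2n n` is the complete multipartite graph with `n` parts of size 2:
vertices are pairs `(i, j)` with `i : Fin n` the part, adjacent iff the parts differ.
This is `K_{2n}` minus a perfect matching. -/
def E2n (n : ℕ) : SimpleGraph (Fin n × Fin 2) where
  Adj u v := u.1 ≠ v.1
  symm := ⟨fun _ _ h => h.symm⟩
  loopless := ⟨fun _ h => h rfl⟩

open Finset

variable {ι κ α : Type*}

/-- A list colouring of the complete multipartite graph whose parts are the fibres of `Prod.fst`. -/
def IsPartwiseListColoring (L : ι × κ → Finset α) (c : ι × κ → α) : Prop :=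
  (∀ v, c v ∈ L v) ∧ ∀ u v, u.1 ≠ v.1 → c u ≠ c v

lemma exists_pair_mem_of_card_lt [Fintype ι] {s : Finset (ι × Fin 2)}
    (hs : Fintype.card ι < #s) : ∃ i, (i, 0) ∈ s ∧ (i, 1) ∈ s := by
  obtain ⟨u, hu, v, hv, huv, hfst⟩ :=
    exists_ne_map_eq_of_card_lt_of_maps_to (t := univ) (f := Prod.fst) (by simpa using hs)
      (fun _ _ => mem_coe.2 (mem_univ _))
  obtain ⟨i, a⟩ := u
  obtain ⟨j, b⟩ := v
  obtain rfl : i = j := hfst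
  refine ⟨i, ?_⟩
  fin_cases a <;> fin_cases b <;> simp_all

lemma exists_injective_mem_of_disjoint_pairs [Fintype ι] [DecidableEq α]
    (L : ι × Fin 2 → Finset α) (hL : ∀ v, Fintype.card ι ≤ #(L v))
    (hdisj : ∀ i, Disjoint (L (i, 0)) (L (i, 1))) :
    ∃ c : ι × Fin 2 → α, Function.Injective c ∧ ∀ v, c v ∈ L v := by
  refine (all_card_le_biUnion_card_iff_exists_injective L).mp fun s => ?_
  rcases le_or_gt #s (Fintype.card ι) with hs | hs
  · obtain rfl | ⟨v, hv⟩ := s.eq_empty_or_nonempty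
    · simp
    · exact hs.trans ((hL v).trans (card_le_card (subset_biUnion_of_mem L hv)))
  · obtain ⟨i, h0, h1⟩ := exists_pair_mem_of_card_lt hs
    calc #s ≤ Fintype.card (ι × Fin 2) := card_le_univ s
      _ = Fintype.card ι + Fintype.card ι := by simp [mul_two]
      _ ≤ #(L (i, 0) ∪ L (i, 1)) := by
        rw [card_union_of_disjoint (hdisj i)]
        exact add_le_add (hL _) (hL _)
      _ ≤ #(s.biUnion L) := card_le_card <|
        union_subset (subset_biUnion_of_mem L h0) (subset_biUnion_of_mem L h1)

lemma IsPartwiseListColoring.extend [DecidableEq ι] [DecidableEq α] {L : ι × κ → Finset α}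
    {i : ι} {x : α} (hx : ∀ k, x ∈ L (i, k)) {c : {j // j ≠ i} × κ → α}
    (hc : IsPartwiseListColoring (fun v : {j // j ≠ i} × κ => (L (v.1.1, v.2)).erase x) c) :
    IsPartwiseListColoring L fun v => if h : v.1 = i then x else c (⟨v.1, h⟩, v.2) := by
  obtain ⟨hcL, hcne⟩ := hc
  refine ⟨fun ⟨j, k⟩ => ?_, fun ⟨j, k⟩ ⟨j', k'⟩ hjj' => ?_⟩
  · by_cases hj : j = i
    · simp [hj, hx]
    · simpa [hj] using mem_of_mem_erase (hcL (⟨j, hj⟩, k))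
  · dsimp only at hjj' ⊢
    by_cases hj : j = i <;> by_cases hj' : j' = i
    · exact absurd (hj.trans hj'.symm) hjj'
    · simpa [hj, hj'] using (ne_of_mem_erase (hcL (⟨j', hj'⟩, k'))).symm
    · simpa [hj, hj'] using ne_of_mem_erase (hcL (⟨j, hj⟩, k))
    · simpa [hj, hj'] using hcne (⟨j, hj⟩, k) (⟨j', hj'⟩, k') (by simpa using hjj')

theorem exists_isPartwiseListColoring [Fintype ι] [DecidableEq α] (L : ι × Fin 2 → Finset α)
    (hL : ∀ v, Fintype.card ι ≤ #(L v)) : ∃ c, IsPartwiseListColoring L c := by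
  induction h : Fintype.card ι using Nat.strong_induction_on generalizing ι with
  | _ n ih =>
  classical
  by_cases hcommon : ∃ i, ∃ x, ∀ k, x ∈ L (i, k)
  · obtain ⟨i, x, hx⟩ := hcommon
    have hcard : Fintype.card {j // j ≠ i} = n - 1 := by
      simp [Fintype.card_subtype_compl, h]
    have hn : 0 < n := h ▸ Fintype.card_pos_iff.2 ⟨i⟩
    obtain ⟨c, hc⟩ := ih (n - 1) (by omega)
      (fun v : {j // j ≠ i} × Fin 2 => (L (v.1.1, v.2)).erase x) (fun v => by
        have := hL (v.1.1, v.2)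
        have := pred_card_le_card_erase (s := L (v.1.1, v.2)) (a := x)
        omega) hcard
    exact ⟨_, hc.extend hx⟩
  · push Not at hcommon
    obtain ⟨c, hinj, hcL⟩ := exists_injective_mem_of_disjoint_pairs L hL fun i =>
      disjoint_left.2 fun x h0 h1 => by
        obtain ⟨k, hk⟩ := hcommon i x
        fin_cases k <;> contradiction
    exact ⟨c, hcL, fun u v huv hc => huv (congrArg Prod.fst (hinj hc))⟩

/-- `E_2^n` is `n`-choosable. -/
theorem stmt0 (n : ℕ) (L : Fin n × Fin 2 → Finset ℕ)
    (hL : ∀ v, n ≤ (L v).card) :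
    ∃ c : Fin n × Fin 2 → ℕ, (∀ v, c v ∈ L v) ∧
      ∀ u v, (E2n n).Adj u v → c u ≠ c v := by
  obtain ⟨c, hcL, hc⟩ := exists_isPartwiseListColoring L (by simpa using hL)
  exact ⟨c, hcL, hc⟩
end

section
/- Small Pot Lemma: Let G be a finite graph and f : V(G) → ℕ with f(v) < |V(G)| for all v. If G is not f-choosable, then G has a bad f-assignment L (an assignment with |L(v)| = f(v) for all v admitting no proper coloring from the lists) whose pot ⋃_{v} L(v) has fewer than |V(G)| colors. -/
/-!
Since `L` is bad, Hall's condition fails for the lists; let `S` be a maximal set of vertices with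
`|L(S)| < |S|`. By maximality, the lists outside `S` with the colours of `L(S)` removed still
satisfy Hall's condition, so they have distinct representatives `r`. Keep `L` on `S` and give
every other vertex `f v` colours from a set `C ⊇ L(S)` of `|V| - 1` colours that meets the old pot
only in `L(S)`. The new pot lies in `C`, and the new assignment is still bad: in a colouring from
it, recolouring by `r` each vertex outside `S` whose colour is not in its old list gives a
colouring from `L`.
-/

def GoodList {V : Type*} (G : SimpleGraph V) (L : V → Finset ℕ) : Prop :=
  ∃ c : V → ℕ, (∀ v, c v ∈ L v) ∧ ∀ u v, G.Adj u v → c u ≠ c v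

open Finset

section Hall

variable {ι α : Type*} [DecidableEq α]

lemma exists_maximal_hall_violator [Fintype ι] (L : ι → Finset α)
    (h : ¬ ∀ s : Finset ι, #s ≤ #(s.biUnion L)) :
    ∃ S : Finset ι, #(S.biUnion L) < #S ∧ ∀ T, S ⊂ T → #T ≤ #(T.biUnion L) := by
  classical
  push Not at h
  obtain ⟨s₀, hs₀⟩ := h
  obtain ⟨S, hS, hSmax⟩ := exists_max_image {s : Finset ι | #(s.biUnion L) < #s} card
    ⟨s₀, by simpa using hs₀⟩
  rw [mem_filter] at hS
  refine ⟨S, hS.2, fun T hST => not_lt.mp fun hT => ?_⟩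
  exact (card_lt_card hST).not_ge (hSmax T (mem_filter.mpr ⟨mem_univ T, hT⟩))

/-- Otherwise `S ∪ T` would be a larger Hall violator. -/
lemma card_le_card_biUnion_sdiff_of_maximal {L : ι → Finset α} {S : Finset ι}
    (hS : #(S.biUnion L) < #S) (hmax : ∀ T, S ⊂ T → #T ≤ #(T.biUnion L))
    {T : Finset ι} (hST : Disjoint S T) :
    #T ≤ #(T.biUnion L \ S.biUnion L) := by
  classical
  rcases T.eq_empty_or_nonempty with rfl | ⟨x, hx⟩
  · simp
  have hSsub : S ⊂ S ∪ T := ssubset_iff_of_subset subset_union_left |>.mpr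
    ⟨x, mem_union_right S hx, disjoint_right.mp hST hx⟩
  have : #T + #S ≤ #(T.biUnion L \ S.biUnion L) + #(S.biUnion L) :=
    calc #T + #S = #(S ∪ T) := by rw [card_union_of_disjoint hST, add_comm]
      _ ≤ #((S ∪ T).biUnion L) := hmax _ hSsub
      _ = #((T.biUnion L \ S.biUnion L) ∪ S.biUnion L) := by
        rw [union_biUnion, sdiff_union_self_eq_union, union_comm]
      _ ≤ _ := card_union_le _ _
  omega

lemma exists_injOn_compl_mem_sdiff [Finite ι] [Inhabited α] {L : ι → Finset α} {S : Finset ι}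
    (hS : #(S.biUnion L) < #S) (hmax : ∀ T, S ⊂ T → #T ≤ #(T.biUnion L)) :
    ∃ r : ι → α, Set.InjOn r (↑S)ᶜ ∧ ∀ v ∉ S, r v ∈ L v \ S.biUnion L := by
  classical
  have hall : ∀ s : Finset {v // v ∉ S}, #s ≤ #(s.biUnion fun v => L v \ S.biUnion L) := by
    intro s
    have hdisj : Disjoint S (s.image Subtype.val) :=
      disjoint_right.mpr fun x hx => by
        obtain ⟨y, _, rfl⟩ := mem_image.mp hx
        exact y.2
    have hsdiff : s.biUnion (fun v => L v \ S.biUnion L) =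
        (s.image Subtype.val).biUnion L \ S.biUnion L := by
      ext
      simp only [image_biUnion, mem_biUnion, mem_sdiff]
      aesop
    have := card_le_card_biUnion_sdiff_of_maximal hS hmax hdisj
    rwa [card_image_of_injective _ Subtype.val_injective, ← hsdiff] at this
  obtain ⟨r, hr, hrL⟩ := (all_card_le_biUnion_card_iff_existsInjective' _).mp hall
  refine ⟨fun v => if h : v ∈ S then default else r ⟨v, h⟩, fun u hu v hv huv => ?_,
    fun v hv => ?_⟩
  · simp only [Set.mem_compl_iff, mem_coe] at hu hv
    simpa [hu, hv] using congrArg Subtype.val (hr (by simpa [hu, hv] using huv))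
  · simpa [hv] using hrL ⟨v, hv⟩

end Hall

lemma Infinite.exists_superset_card_eq_inter_subset {α : Type*} [DecidableEq α] [Infinite α]
    {U P : Finset α} (hUP : U ⊆ P) {k : ℕ} (hk : #U ≤ k) :
    ∃ C : Finset α, U ⊆ C ∧ #C = k ∧ C ∩ P ⊆ U := by
  obtain ⟨D, hPD, hD⟩ := Infinite.exists_superset_card_eq P (#P + (k - #U)) (by omega)
  refine ⟨U ∪ (D \ P), subset_union_left, ?_, fun x hx => ?_⟩
  · rw [card_union_of_disjoint (disjoint_sdiff.mono_left hUP), card_sdiff_of_subset hPD]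
    omega
  · simp only [mem_inter, mem_union, mem_sdiff] at hx
    tauto

section ListColoring

variable {V : Type*} {G : SimpleGraph V}

lemma GoodList.of_card_le_card_biUnion [Finite V] {L : V → Finset ℕ}
    (hall : ∀ s : Finset V, #s ≤ #(s.biUnion L)) : GoodList G L := by
  obtain ⟨c, hc, hcL⟩ := (all_card_le_biUnion_card_iff_existsInjective' L).mp hall
  exact ⟨c, hcL, fun u v huv e => G.ne_of_adj huv (hc e)⟩

/-- Recolour by `r` each vertex whose colour is not in its `L`-list: the colours kept lie in
`S.biUnion L`, which `r` avoids, and the new ones are distinct. -/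
lemma GoodList.of_injOn_compl {L L' : V → Finset ℕ} {S : Finset V} {r : V → ℕ}
    (hr : Set.InjOn r (↑S)ᶜ) (hrL : ∀ v ∉ S, r v ∈ L v \ S.biUnion L)
    (hS : ∀ v ∈ S, L' v ⊆ L v) (hout : ∀ v ∉ S, L' v ∩ L v ⊆ S.biUnion L)
    (h : GoodList G L') : GoodList G L := by
  classical
  obtain ⟨c', hc'L', hc'adj⟩ := h
  have hkept : ∀ v, c' v ∈ L v → c' v ∈ S.biUnion L := fun v hv => by
    by_cases hvS : v ∈ S
    · exact mem_biUnion.mpr ⟨v, hvS, hv⟩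
    · exact hout v hvS (mem_inter.mpr ⟨hc'L' v, hv⟩)
  have hmoved : ∀ v, c' v ∉ L v → v ∉ S := fun v hv hvS => hv (hS v hvS (hc'L' v))
  refine ⟨fun v => if c' v ∈ L v then c' v else r v, fun v => ?_, fun u v huv => ?_⟩
  · dsimp only
    split_ifs with hv
    · exact hv
    · exact (mem_sdiff.mp (hrL v (hmoved v hv))).1
  · dsimp only
    split_ifs with hu hv hv
    · exact hc'adj u v huv
    · exact fun e => (mem_sdiff.mp (hrL v (hmoved v hv))).2 (e ▸ hkept u hu)
    · exact fun e => (mem_sdiff.mp (hrL u (hmoved u hu))).2 (e ▸ hkept v hv)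
    · exact fun e => G.ne_of_adj huv (hr (hmoved u hu) (hmoved v hv) e)

end ListColoring

theorem stmt1_general {V : Type*} [Fintype V] (G : SimpleGraph V)
    (f : V → ℕ) (hf : ∀ v, f v < Fintype.card V)
    (h : ¬ ∀ L : V → Finset ℕ, (∀ v, (L v).card = f v) → GoodList G L) :
    ∃ L : V → Finset ℕ, (∀ v, (L v).card = f v) ∧ ¬ GoodList G L ∧
      (Finset.univ.biUnion L).card < Fintype.card V := by
  classical
  push Not at h
  obtain ⟨L, hLcard, hLbad⟩ := h
  obtain ⟨S, hS, hmax⟩ :=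
    exists_maximal_hall_violator L fun hall => hLbad (GoodList.of_card_le_card_biUnion hall)
  obtain ⟨r, hr, hrL⟩ := exists_injOn_compl_mem_sdiff hS hmax
  have hSV : #S ≤ Fintype.card V := card_le_univ S
  obtain ⟨C, hSC, hC, hCP⟩ := Infinite.exists_superset_card_eq_inter_subset
    (biUnion_subset_biUnion_of_subset_left L (subset_univ S)) (k := Fintype.card V - 1) (by omega)
  choose B hBC hBcard using fun v =>
    exists_subset_card_eq (s := C) (n := f v) (by have := hf v; omega)
  refine ⟨fun v => if v ∈ S then L v else B v, fun v => ?_, fun hgood => hLbad ?_, ?_⟩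
  · dsimp only
    split_ifs <;> simp [hLcard, hBcard]
  · refine hgood.of_injOn_compl hr hrL (fun v hv => by simp [hv]) fun v hv => ?_
    simp only [hv, if_false]
    exact (inter_subset_inter (hBC v) (subset_biUnion_of_mem L (mem_univ v))).trans hCP
  · have hpot : univ.biUnion (fun v => if v ∈ S then L v else B v) ⊆ C :=
      biUnion_subset.mpr fun v _ => by
        split_ifs with hv
        · exact (subset_biUnion_of_mem L hv).trans hSC
        · exact hBC v
    have := card_le_card hpot
    omega

/-- Small Pot Lemma. -/
theorem stmt1 {V : Type*} [Fintype V] [DecidableEq V] (G : SimpleGraph V)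
    (f : V → ℕ) (hf : ∀ v, f v < Fintype.card V)
    (h : ¬ ∀ L : V → Finset ℕ, (∀ v, (L v).card = f v) → GoodList G L) :
    ∃ L : V → Finset ℕ, (∀ v, (L v).card = f v) ∧ ¬ GoodList G L ∧
      (Finset.univ.biUnion L).card < Fintype.card V :=
  stmt1_general G f hf h
end

section
/- Let G be a graph, f : V(G) → ℕ, suppose G is not f-choosable, and let L be a bad f-assignment minimizing |Pot(L)|. Then for every color c ∈ Pot(L), there is a connected component H of the subgraph G_c induced by the vertices whose lists contain c such that Pot_H(L) = Pot(L). In particular, the union of the lists over all vertices of G_c equals Pot(L). -/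
/-- The subgraph of `G` induced (as a spanning subgraph with extra isolated vertices)
by the vertices satisfying `P`. -/
def restrict {V : Type*} (G : SimpleGraph V) (P : V → Prop) : SimpleGraph V where
  Adj a b := G.Adj a b ∧ P a ∧ P b
  symm := ⟨fun _ _ ⟨h, ha, hb⟩ => ⟨h.symm, hb, ha⟩⟩
  loopless := ⟨fun _ ⟨h, _⟩ => G.irrefl h⟩

/-!
If no component of `G_c` sees the whole pot, pick for every component `H` a colour
`d_H ∈ Pot(L) \ Pot_H(L)` and replace `c` by `d_H` in the lists of `H`. List sizes are kept
and `c` leaves the pot, so by minimality the new assignment is good. Recolouring back to `c`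
every vertex of `H` that received `d_H` gives an `L`-colouring: two adjacent recoloured vertices
lie in the same component, hence had the same colour `d_H`, and no other vertex uses `c`.
-/

section

open SimpleGraph

variable {V : Type*} {G : SimpleGraph V}

theorem restrict_reachable_imp {P : V → Prop} {v w : V} (h : (restrict G P).Reachable v w)
    (hv : P v) : P w := by
  obtain ⟨p⟩ := h
  induction p with
  | nil => exact hv
  | cons hadj _ ih => exact ih hadj.2.2

def replaceColor (L : V → Finset ℕ) (c : ℕ) (d : V → ℕ) (v : V) : Finset ℕ :=
  if c ∈ L v then insert (d v) ((L v).erase c) else L v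

section replaceColor

variable {L : V → Finset ℕ} {c : ℕ} {d : V → ℕ}

theorem mem_of_mem_replaceColor {v : V} {x : ℕ} (hx : x ∈ replaceColor L c d v) :
    (c ∈ L v ∧ x = d v) ∨ (x ∈ L v ∧ x ≠ c) := by
  unfold replaceColor at hx
  split_ifs at hx with hc
  · rcases Finset.mem_insert.1 hx with rfl | hx
    · exact .inl ⟨hc, rfl⟩
    · exact .inr ⟨(Finset.mem_erase.1 hx).2, (Finset.mem_erase.1 hx).1⟩
  · exact .inr ⟨hx, fun h => hc (h ▸ hx)⟩

theorem card_replaceColor (hd : ∀ v, c ∈ L v → d v ∉ L v) (v : V) :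
    (replaceColor L c d v).card = (L v).card := by
  unfold replaceColor
  split_ifs with hc
  · rw [Finset.card_insert_of_notMem fun h => hd v hc (Finset.mem_of_mem_erase h),
      Finset.card_erase_add_one hc]
  · rfl

theorem biUnion_replaceColor_subset [Fintype V]
    (hd : ∀ v, c ∈ L v → d v ∈ Finset.univ.biUnion L ∧ d v ∉ L v) :
    Finset.univ.biUnion (replaceColor L c d) ⊆ (Finset.univ.biUnion L).erase c := by
  intro x hx
  obtain ⟨v, -, hxv⟩ := Finset.mem_biUnion.1 hx
  rcases mem_of_mem_replaceColor hxv with ⟨hc, rfl⟩ | ⟨hxL, hxc⟩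
  · exact Finset.mem_erase.2 ⟨fun h => (hd v hc).2 (by rwa [h]), (hd v hc).1⟩
  · exact Finset.mem_erase.2 ⟨hxc, Finset.mem_biUnion.2 ⟨v, Finset.mem_univ v, hxL⟩⟩

theorem GoodList.of_replaceColor (hconst : ∀ u v, G.Adj u v → c ∈ L u → c ∈ L v → d u = d v)
    (h : GoodList G (replaceColor L c d)) : GoodList G L := by
  obtain ⟨col, hcol, hproper⟩ := h
  have hkeep : ∀ v, ¬(c ∈ L v ∧ col v = d v) → col v ∈ L v ∧ col v ≠ c := fun v hv =>
    (mem_of_mem_replaceColor (hcol v)).resolve_left hv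
  refine ⟨fun v => if c ∈ L v ∧ col v = d v then c else col v, fun v => ?_, fun u v huv => ?_⟩
  · dsimp only
    split_ifs with hv
    exacts [hv.1, (hkeep v hv).1]
  · dsimp only
    split_ifs with hu hv hv
    · exact fun _ => hproper u v huv (by rw [hu.2, hv.2, hconst u v huv hu.1 hv.1])
    · exact (hkeep v hv).2.symm
    · exact (hkeep u hu).2
    · exact hproper u v huv

end replaceColor

theorem exists_component_pot_eq [Fintype V] {L : V → Finset ℕ} (hbad : ¬ GoodList G L)
    (hmin : ∀ L' : V → Finset ℕ, (∀ v, (L' v).card = (L v).card) → ¬ GoodList G L' →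
      (Finset.univ.biUnion L).card ≤ (Finset.univ.biUnion L').card)
    {c : ℕ} (hc : c ∈ Finset.univ.biUnion L) :
    ∃ v, c ∈ L v ∧
      (⋃ w ∈ {w | (restrict G (fun x => c ∈ L x)).Reachable v w}, (L w : Set ℕ)) =
        ⋃ u, (L u : Set ℕ) := by
  set Gc := restrict G (fun x => c ∈ L x)
  by_contra! hcover
  have hmissing : ∀ C : Gc.ConnectedComponent, ∃ d, ∀ v, Gc.connectedComponentMk v = C →
      c ∈ L v → d ∈ Finset.univ.biUnion L ∧ d ∉ L v := by
    refine fun C => C.ind fun v => ?_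
    by_cases hv : c ∈ L v
    · obtain ⟨d, hdPot, hdH⟩ := Set.exists_of_ssubset
        ((Set.iUnion₂_subset_iUnion _ _).lt_of_ne (hcover v hv))
      simp only [Set.mem_iUnion, Set.mem_ofPred_eq, Finset.mem_coe, not_exists] at hdPot hdH
      refine ⟨d, fun w hw _ => ⟨?_, hdH w (ConnectedComponent.exact hw).symm⟩⟩
      simpa using hdPot
    · exact ⟨0, fun w hw hcw =>
        absurd (restrict_reachable_imp (ConnectedComponent.exact hw) hcw) hv⟩
  choose g hg using hmissing
  set d := fun v => g (Gc.connectedComponentMk v)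
  have hd : ∀ v, c ∈ L v → d v ∈ Finset.univ.biUnion L ∧ d v ∉ L v := fun v => hg _ v rfl
  have hbad' : ¬ GoodList G (replaceColor L c d) := fun h =>
    hbad <| h.of_replaceColor fun u v huv hu hv =>
      congrArg g (ConnectedComponent.connectedComponentMk_eq_of_adj ⟨huv, hu, hv⟩)
  have hle := hmin _ (card_replaceColor fun v hv => (hd v hv).2) hbad'
  have hsub := Finset.card_le_card (biUnion_replaceColor_subset hd)
  have hlt := Finset.card_erase_lt_of_mem hc
  omega

end

theorem stmt2_general {V : Type*} [Fintype V] (G : SimpleGraph V) (f : V → ℕ)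
    (L : V → Finset ℕ) (hsize : ∀ v, (L v).card = f v) (hbad : ¬ GoodList G L)
    (hmin : ∀ L' : V → Finset ℕ, (∀ v, (L' v).card = f v) → ¬ GoodList G L' →
      (Finset.univ.biUnion L).card ≤ (Finset.univ.biUnion L').card) :
    ∀ c ∈ Finset.univ.biUnion L,
      (∃ v, c ∈ L v ∧
        (⋃ w ∈ {w | (restrict G (fun x => c ∈ L x)).Reachable v w}, (L w : Set ℕ)) =
          ⋃ u, (L u : Set ℕ)) ∧
      (⋃ w ∈ {w | c ∈ L w}, (L w : Set ℕ)) = ⋃ u, (L u : Set ℕ) := by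
  intro c hc
  obtain ⟨v, hv, hcover⟩ :=
    exists_component_pot_eq hbad (fun L' hL' => hmin L' fun v => (hL' v).trans (hsize v)) hc
  refine ⟨⟨v, hv, hcover⟩, (Set.iUnion₂_subset_iUnion _ _).antisymm ?_⟩
  rw [← hcover]
  exact Set.biUnion_subset_biUnion_left fun w hw => restrict_reachable_imp hw hv

/-- If `L` is a bad `f`-assignment minimizing the pot, then for every color `c` in the pot
there is a connected component of `G_c` whose lists together cover the whole pot.
In particular the lists over all of `G_c` cover the whole pot. -/
theorem stmt2 {V : Type*} [Fintype V] [DecidableEq V] (G : SimpleGraph V) (f : V → ℕ)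
    (L : V → Finset ℕ) (hsize : ∀ v, (L v).card = f v) (hbad : ¬ GoodList G L)
    (hmin : ∀ L' : V → Finset ℕ, (∀ v, (L' v).card = f v) → ¬ GoodList G L' →
      (Finset.univ.biUnion L).card ≤ (Finset.univ.biUnion L').card) :
    ∀ c ∈ Finset.univ.biUnion L,
      (∃ v, c ∈ L v ∧
        (⋃ w ∈ {w | (restrict G (fun x => c ∈ L x)).Reachable v w}, (L w : Set ℕ)) =
          ⋃ u, (L u : Set ℕ)) ∧
      (⋃ w ∈ {w | c ∈ L w}, (L w : Set ℕ)) = ⋃ u, (L u : Set ℕ) :=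
  stmt2_general G f L hsize hbad hmin
end

section
/- The join of the complete graph K_1 with the graph N_6 is d_1-choosable, where N_6 is the graph on vertices x_1,...,x_5,y with x_1x_2x_3x_4x_5x_1 an induced 5-cycle and y adjacent exactly to x_1, x_2, x_3, x_4. -/
/-!
Colour the cycle `0 1 2 3 4`, then `5` (the vertex `y`), then the apex `6`. Vertex `5` has four
colours against four neighbours and the apex five against six, so the colouring has to save one
colour at `5` and two at the apex: two nonadjacent vertices share a colour, or a vertex takes a
colour missing from the list of a later neighbour. Such savings are looked for according to
whether vertex `4` shares a colour with `5`, with `1` or with `2`. When none of the expected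
savings exists, the lists are squeezed into the five colours of the apex and pinned down to one
configuration, which is coloured by hand. When `4` shares no colour with `5`, `1`, `2`, its
colours only meet the lists of `0`, `3` and the apex: one of them goes to the apex, leaving a fan
with degree-sized lists, or they repeat on `0` and `3`, or `4` keeps a colour of its own. The
reflection of the cycle fixing `4` halves the cases.
-/

/-- Degree via the cardinality of the neighbor set. -/
noncomputable def deg {α : Type*} (G : SimpleGraph α) (v : α) : ℕ :=
  (G.neighborSet v).ncard

/-- `K_1 * N_6`: vertices `0,…,4` are `x_1,…,x_5` forming an induced 5-cycle,
vertex `5` is `y`, adjacent exactly to `x_1,x_2,x_3,x_4`, and vertex `6` is the `K_1`,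
joined to everything. -/
def K1N6 : SimpleGraph (Fin 7) :=
  SimpleGraph.fromRel (fun u v => (u, v) ∈
    [((0 : Fin 7), (1 : Fin 7)), (1,2), (2,3), (3,4), (4,0),
     (5,0), (5,1), (5,2), (5,3),
     (6,0), (6,1), (6,2), (6,3), (6,4), (6,5)])

open Finset

namespace SimpleGraph

variable {V W α : Type*}

def ListColorable (G : SimpleGraph V) (L : V → Finset α) : Prop :=
  ∃ c : V → α, (∀ v, c v ∈ L v) ∧ ∀ u v, G.Adj u v → c u ≠ c v

theorem ListColorable.mono {G : SimpleGraph V} {L L' : V → Finset α} (hL : ∀ v, L v ⊆ L' v)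
    (h : G.ListColorable L) : G.ListColorable L' :=
  let ⟨c, hc, hadj⟩ := h
  ⟨c, fun v => hL v (hc v), hadj⟩

theorem ListColorable.comap {G : SimpleGraph V} {H : SimpleGraph W} (f : G →g H)
    {L : W → Finset α} (h : H.ListColorable L) : G.ListColorable (L ∘ f) :=
  let ⟨c, hc, hadj⟩ := h
  ⟨c ∘ f, fun v => hc (f v), fun _ _ huv => hadj _ _ (f.map_adj huv)⟩

end SimpleGraph

namespace Finset

variable {α : Type*} [DecidableEq α] {s t u : Finset α}

theorem exists_mem_notMem_of_length_lt (s : Finset α) (l : List α) (h : l.length < #s) :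
    ∃ x ∈ s, x ∉ l := by
  obtain ⟨x, hx, hxl⟩ := exists_mem_notMem_of_card_lt_card (h.trans_le' l.toFinset_card_le)
  exact ⟨x, hx, by simpa using hxl⟩

theorem card_add_card_le_of_disjoint (hs : s ⊆ u) (ht : t ⊆ u) (hst : Disjoint s t) :
    #s + #t ≤ #u :=
  card_union_of_disjoint hst ▸ card_le_card (union_subset hs ht)

theorem mem_inter_and_union_eq_of_card_le {a : α} (hu : s ∪ t ⊆ u) (hst : s ∩ t ⊆ {a})
    (h : #u + 1 ≤ #s + #t) : a ∈ s ∩ t ∧ s ∪ t = u := by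
  have hinter := card_le_card hst
  have hunion := card_le_card hu
  have hsum := card_union_add_card_inter s t
  rw [card_singleton] at hinter
  refine ⟨?_, eq_of_subset_of_card_le hu (by omega)⟩
  rw [eq_of_subset_of_card_le hst (by rw [card_singleton]; omega)]
  exact mem_singleton_self a

theorem card_lt_card_sdiff_add_card (h : ¬t ⊆ s) : #s < #(s \ t) + #t := by
  have h₁ := card_sdiff_add_card_inter s t
  have h₂ : #(s ∩ t) < #t :=
    card_lt_card ⟨inter_subset_right, fun h' => h (h'.trans inter_subset_left)⟩
  omega

end Finset

theorem exists_fan_coloring {α : Type*} [DecidableEq α] {ℓ₀ ℓ₁ ℓ₂ ℓ₃ ℓ : Finset α}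
    (h₀ : ℓ₀.Nonempty) (h₁ : 3 ≤ #ℓ₁) (h₂ : 3 ≤ #ℓ₂) (h₃ : 2 ≤ #ℓ₃) (h : 4 ≤ #ℓ) :
    ∃ c₀ ∈ ℓ₀, ∃ c₁ ∈ ℓ₁, ∃ c₂ ∈ ℓ₂, ∃ c₃ ∈ ℓ₃, ∃ c ∈ ℓ,
      c₀ ≠ c₁ ∧ c₁ ≠ c₂ ∧ c₂ ≠ c₃ ∧ c ≠ c₀ ∧ c ≠ c₁ ∧ c ≠ c₂ ∧ c ≠ c₃ := by
  obtain ⟨a, ha⟩ := h₀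
  by_cases hℓ₃ : ℓ₃ ⊆ ℓ.erase a; swap
  · obtain ⟨b, hb₃, hb⟩ := not_subset.1 hℓ₃
    rw [mem_erase] at hb
    obtain ⟨x₁, hx₁, hx₁'⟩ := ℓ₁.exists_mem_notMem_of_length_lt [a] (by simp; omega)
    obtain ⟨x₂, hx₂, hx₂'⟩ := ℓ₂.exists_mem_notMem_of_length_lt [x₁, b] (by simp; omega)
    obtain ⟨y, hy, hy'⟩ := ℓ.exists_mem_notMem_of_length_lt [a, x₁, x₂] (by simp; omega)
    exact ⟨a, ha, x₁, hx₁, x₂, hx₂, b, hb₃, y, hy, by grind⟩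
  by_cases h₁₃ : Disjoint (ℓ₁.erase a) ℓ₃; swap
  · obtain ⟨g, hg₁, hg₃⟩ := not_disjoint_iff.1 h₁₃
    rw [mem_erase] at hg₁
    obtain ⟨x₂, hx₂, hx₂'⟩ := ℓ₂.exists_mem_notMem_of_length_lt [g] (by simp; omega)
    obtain ⟨y, hy, hy'⟩ := ℓ.exists_mem_notMem_of_length_lt [a, g, x₂] (by simp; omega)
    exact ⟨a, ha, g, hg₁.2, x₂, hx₂, g, hg₃, y, hy, by grind⟩
  by_cases hℓ₁ : ℓ₁.erase a ⊆ ℓ.erase a; swap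
  · obtain ⟨b, hb₁, hb⟩ := not_subset.1 hℓ₁
    rw [mem_erase] at hb₁ hb
    obtain ⟨x₃, hx₃⟩ := card_pos.1 (by omega : 0 < #ℓ₃)
    obtain ⟨x₂, hx₂, hx₂'⟩ := ℓ₂.exists_mem_notMem_of_length_lt [b, x₃] (by simp; omega)
    obtain ⟨y, hy, hy'⟩ := ℓ.exists_mem_notMem_of_length_lt [a, x₂, x₃] (by simp; omega)
    exact ⟨a, ha, b, hb₁.2, x₂, hx₂, x₃, hx₃, y, hy, by grind⟩
  have hℓ : 4 ≤ #(ℓ.erase a) := by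
    have := card_add_card_le_of_disjoint hℓ₁ hℓ₃ h₁₃
    have := pred_card_le_card_erase (s := ℓ₁) (a := a)
    omega
  obtain ⟨x₁, hx₁, hx₁'⟩ := ℓ₁.exists_mem_notMem_of_length_lt [a] (by simp; omega)
  obtain ⟨x₃, hx₃⟩ := card_pos.1 (by omega : 0 < #ℓ₃)
  obtain ⟨x₂, hx₂, hx₂'⟩ := ℓ₂.exists_mem_notMem_of_length_lt [x₁, x₃] (by simp; omega)
  obtain ⟨y, hy, hy'⟩ := (ℓ.erase a).exists_mem_notMem_of_length_lt [x₁, x₂, x₃] (by simp; omega)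
  rw [mem_erase] at hy
  exact ⟨a, ha, x₁, hx₁, x₂, hx₂, x₃, hx₃, y, hy.2, by grind⟩

namespace K1N6

variable {L : Fin 7 → Finset ℕ}

instance : DecidableRel K1N6.Adj := by
  unfold K1N6; infer_instance

theorem listColorable_of_colors (c₀ c₁ c₂ c₃ c₄ c₅ c₆ : ℕ)
    (h : (c₀ ∈ L 0 ∧ c₁ ∈ L 1 ∧ c₂ ∈ L 2 ∧ c₃ ∈ L 3 ∧ c₄ ∈ L 4 ∧ c₅ ∈ L 5 ∧ c₆ ∈ L 6) ∧
      (c₀ ≠ c₁ ∧ c₁ ≠ c₂ ∧ c₂ ≠ c₃ ∧ c₃ ≠ c₄ ∧ c₄ ≠ c₀) ∧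
      (c₅ ≠ c₀ ∧ c₅ ≠ c₁ ∧ c₅ ≠ c₂ ∧ c₅ ≠ c₃) ∧
      (c₆ ≠ c₀ ∧ c₆ ≠ c₁ ∧ c₆ ≠ c₂ ∧ c₆ ≠ c₃ ∧ c₆ ≠ c₄ ∧ c₆ ≠ c₅)) :
    K1N6.ListColorable L := by
  refine ⟨![c₀, c₁, c₂, c₃, c₄, c₅, c₆], fun v => ?_, fun u v huv => ?_⟩
  · fin_cases v <;> simp [h]
  · fin_cases u <;> fin_cases v <;> simp [K1N6] at huv ⊢ <;> grind

def mirror : K1N6 →g K1N6 where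
  toFun := ![3, 2, 1, 0, 4, 5, 6]
  map_rel' := by decide

theorem mirror_mirror (v : Fin 7) : mirror (mirror v) = v := by
  revert v; decide

theorem listColorable_of_comp_mirror (h : K1N6.ListColorable (L ∘ mirror)) :
    K1N6.ListColorable L := by
  simpa [Function.comp_def, mirror_mirror] using h.comap mirror

theorem deg_sub_one (v : Fin 7) : deg K1N6 v - 1 = ![3, 3, 3, 3, 2, 4, 5] v := by
  unfold deg
  rw [Set.ncard_eq_toFinset_card']
  revert v; decide

abbrev IsTight (L : Fin 7 → Finset ℕ) : Prop :=
  ∀ v, #(L v) = ![3, 3, 3, 3, 2, 4, 5] v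

theorem IsTight.comp_mirror (hL : IsTight L) : IsTight (L ∘ mirror) :=
  fun v => (hL (mirror v)).trans (by revert v; decide)

theorem exists_isTight_subset (hL : ∀ v, deg K1N6 v - 1 ≤ #(L v)) :
    ∃ L' : Fin 7 → Finset ℕ, IsTight L' ∧ ∀ v, L' v ⊆ L v := by
  choose L' hsub hcard using fun v => exists_subset_card_eq ((deg_sub_one v).symm.trans_le (hL v))
  exact ⟨L', hcard, hsub⟩

theorem listColorable_of_mem_four_five_of_mem_zero_notMem_six (hL : IsTight L) {c a : ℕ}
    (hc4 : c ∈ L 4) (hc5 : c ∈ L 5) (ha0 : a ∈ L 0) (hac : a ≠ c) (ha6 : a ∉ L 6) :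
    K1N6.ListColorable L := by
  obtain ⟨x₁, hx₁, hx₁'⟩ := (L 1).exists_mem_notMem_of_length_lt [c, a] (by simp [hL])
  obtain ⟨x₂, hx₂, hx₂'⟩ := (L 2).exists_mem_notMem_of_length_lt [c, x₁] (by simp [hL])
  obtain ⟨x₃, hx₃, hx₃'⟩ := (L 3).exists_mem_notMem_of_length_lt [c, x₂] (by simp [hL])
  obtain ⟨z, hz, hz'⟩ := (L 6).exists_mem_notMem_of_length_lt [c, x₁, x₂, x₃] (by simp [hL])
  exact listColorable_of_colors a x₁ x₂ x₃ c c z (by grind)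

theorem listColorable_of_mem_four_five_of_mem_one_notMem_six (hL : IsTight L) {c a : ℕ}
    (hc4 : c ∈ L 4) (hc5 : c ∈ L 5) (ha1 : a ∈ L 1) (hac : a ≠ c) (ha6 : a ∉ L 6) :
    K1N6.ListColorable L := by
  obtain ⟨x₀, hx₀, hx₀'⟩ := (L 0).exists_mem_notMem_of_length_lt [c, a] (by simp [hL])
  obtain ⟨x₂, hx₂, hx₂'⟩ := (L 2).exists_mem_notMem_of_length_lt [c, a] (by simp [hL])
  obtain ⟨x₃, hx₃, hx₃'⟩ := (L 3).exists_mem_notMem_of_length_lt [c, x₂] (by simp [hL])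
  obtain ⟨z, hz, hz'⟩ := (L 6).exists_mem_notMem_of_length_lt [c, x₀, x₂, x₃] (by simp [hL])
  exact listColorable_of_colors x₀ a x₂ x₃ c c z (by grind)

theorem listColorable_of_mem_zero_one_two_three (hL : IsTight L) {c t : ℕ} (hc0 : c ∈ L 0)
    (hc1 : c ∈ L 1) (hc2 : c ∈ L 2) (hc3 : c ∈ L 3) (ht4 : t ∈ L 4) (htc : t ≠ c)
    (ht : t ∈ L 1 ∨ t ∈ L 2 ∨ t ∉ L 6) :
    K1N6.ListColorable L := by
  rcases ht with ht1 | ht2 | ht6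
  · obtain ⟨x₃, hx₃, hx₃'⟩ := (L 3).exists_mem_notMem_of_length_lt [c, t] (by simp [hL])
    obtain ⟨y, hy, hy'⟩ := (L 5).exists_mem_notMem_of_length_lt [c, t, x₃] (by simp [hL])
    obtain ⟨z, hz, hz'⟩ := (L 6).exists_mem_notMem_of_length_lt [c, t, x₃, y] (by simp [hL])
    exact listColorable_of_colors c t c x₃ t y z (by grind)
  · obtain ⟨x₀, hx₀, hx₀'⟩ := (L 0).exists_mem_notMem_of_length_lt [c, t] (by simp [hL])
    obtain ⟨y, hy, hy'⟩ := (L 5).exists_mem_notMem_of_length_lt [c, t, x₀] (by simp [hL])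
    obtain ⟨z, hz, hz'⟩ := (L 6).exists_mem_notMem_of_length_lt [c, t, x₀, y] (by simp [hL])
    exact listColorable_of_colors x₀ c t c t y z (by grind)
  · obtain ⟨x₁, hx₁, hx₁'⟩ := (L 1).exists_mem_notMem_of_length_lt [c] (by simp [hL])
    obtain ⟨x₃, hx₃, hx₃'⟩ := (L 3).exists_mem_notMem_of_length_lt [c, t] (by simp [hL])
    obtain ⟨y, hy, hy'⟩ := (L 5).exists_mem_notMem_of_length_lt [c, x₁, x₃] (by simp [hL])
    obtain ⟨z, hz, hz'⟩ := (L 6).exists_mem_notMem_of_length_lt [c, x₁, x₃, y] (by simp [hL])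
    exact listColorable_of_colors c x₁ c x₃ t y z (by grind)

theorem listColorable_of_mem_four_five_of_mem_six (hL : IsTight L) {c : ℕ} (hc4 : c ∈ L 4)
    (hc5 : c ∈ L 5) (hc6 : c ∈ L 6) (h02 : L 0 ∩ L 2 ⊆ {c}) (h13 : L 1 ∩ L 3 ⊆ {c})
    (h03 : L 0 ∩ L 3 ⊆ {c}) : K1N6.ListColorable L := by
  by_cases h0 : L 0 ⊆ L 6; swap
  · obtain ⟨a, ha0, ha6⟩ := not_subset.1 h0
    exact listColorable_of_mem_four_five_of_mem_zero_notMem_six hL hc4 hc5 ha0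
      (ne_of_mem_of_not_mem hc6 ha6).symm ha6
  by_cases h3 : L 3 ⊆ L 6; swap
  · obtain ⟨a, ha3, ha6⟩ := not_subset.1 h3
    exact listColorable_of_comp_mirror <|
      listColorable_of_mem_four_five_of_mem_zero_notMem_six hL.comp_mirror hc4 hc5 ha3
        (ne_of_mem_of_not_mem hc6 ha6).symm ha6
  by_cases h1 : L 1 ⊆ L 6; swap
  · obtain ⟨a, ha1, ha6⟩ := not_subset.1 h1
    exact listColorable_of_mem_four_five_of_mem_one_notMem_six hL hc4 hc5 ha1
      (ne_of_mem_of_not_mem hc6 ha6).symm ha6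
  by_cases h2 : L 2 ⊆ L 6; swap
  · obtain ⟨a, ha2, ha6⟩ := not_subset.1 h2
    exact listColorable_of_comp_mirror <|
      listColorable_of_mem_four_five_of_mem_one_notMem_six hL.comp_mirror hc4 hc5 ha2
        (ne_of_mem_of_not_mem hc6 ha6).symm ha6
  -- `L 0, L 2` and `L 1, L 3` are pairs of 3-sets inside the 5-set `L 6` meeting at most in `c`.
  obtain ⟨hc02, h026⟩ := mem_inter_and_union_eq_of_card_le (union_subset h0 h2) h02 (by simp [hL])
  obtain ⟨hc13, h136⟩ := mem_inter_and_union_eq_of_card_le (union_subset h1 h3) h13 (by simp [hL])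
  obtain ⟨t, ht4, htc⟩ := (L 4).exists_mem_notMem_of_length_lt [c] (by simp [hL])
  rw [mem_inter] at hc02 hc13
  have htc : t ≠ c := by simpa using htc
  refine listColorable_of_mem_zero_one_two_three hL hc02.1 hc13.1 hc02.2 hc13.2 ht4 htc ?_
  by_cases ht6 : t ∈ L 6; swap
  · exact .inr (.inr ht6)
  rcases mem_union.1 (h026 ▸ ht6) with ht0 | ht2
  · have ht3 : t ∉ L 3 := fun ht3 => htc (by simpa using h03 (mem_inter.2 ⟨ht0, ht3⟩))
    exact .inl ((mem_union.1 (h136 ▸ ht6)).resolve_right ht3)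
  · exact .inr (.inl ht2)

theorem listColorable_of_mem_four_five (hL : IsTight L) {c : ℕ} (hc4 : c ∈ L 4) (hc5 : c ∈ L 5) :
    K1N6.ListColorable L := by
  by_cases hc6 : c ∈ L 6; swap
  · obtain ⟨x₀, hx₀, hx₀'⟩ := (L 0).exists_mem_notMem_of_length_lt [c] (by simp [hL])
    obtain ⟨x₁, hx₁, hx₁'⟩ := (L 1).exists_mem_notMem_of_length_lt [c, x₀] (by simp [hL])
    obtain ⟨x₂, hx₂, hx₂'⟩ := (L 2).exists_mem_notMem_of_length_lt [c, x₁] (by simp [hL])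
    obtain ⟨x₃, hx₃, hx₃'⟩ := (L 3).exists_mem_notMem_of_length_lt [c, x₂] (by simp [hL])
    obtain ⟨z, hz, hz'⟩ := (L 6).exists_mem_notMem_of_length_lt [x₀, x₁, x₂, x₃] (by simp [hL])
    exact listColorable_of_colors x₀ x₁ x₂ x₃ c c z (by grind)
  by_cases h02 : L 0 ∩ L 2 ⊆ {c}; swap
  · obtain ⟨g, hg, hgc⟩ := not_subset.1 h02
    rw [mem_inter] at hg; rw [mem_singleton] at hgc
    obtain ⟨x₁, hx₁, hx₁'⟩ := (L 1).exists_mem_notMem_of_length_lt [c, g] (by simp [hL])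
    obtain ⟨x₃, hx₃, hx₃'⟩ := (L 3).exists_mem_notMem_of_length_lt [c, g] (by simp [hL])
    obtain ⟨z, hz, hz'⟩ := (L 6).exists_mem_notMem_of_length_lt [c, g, x₁, x₃] (by simp [hL])
    exact listColorable_of_colors g x₁ g x₃ c c z (by grind)
  by_cases h13 : L 1 ∩ L 3 ⊆ {c}; swap
  · obtain ⟨g, hg, hgc⟩ := not_subset.1 h13
    rw [mem_inter] at hg; rw [mem_singleton] at hgc
    obtain ⟨x₀, hx₀, hx₀'⟩ := (L 0).exists_mem_notMem_of_length_lt [c, g] (by simp [hL])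
    obtain ⟨x₂, hx₂, hx₂'⟩ := (L 2).exists_mem_notMem_of_length_lt [c, g] (by simp [hL])
    obtain ⟨z, hz, hz'⟩ := (L 6).exists_mem_notMem_of_length_lt [c, x₀, g, x₂] (by simp [hL])
    exact listColorable_of_colors x₀ g x₂ g c c z (by grind)
  by_cases h03 : L 0 ∩ L 3 ⊆ {c}; swap
  · obtain ⟨g, hg, hgc⟩ := not_subset.1 h03
    rw [mem_inter] at hg; rw [mem_singleton] at hgc
    have hg2 : g ∉ L 2 := fun hg2 => hgc (by simpa using h02 (mem_inter.2 ⟨hg.1, hg2⟩))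
    obtain ⟨x₁, hx₁, hx₁'⟩ := (L 1).exists_mem_notMem_of_length_lt [c, g] (by simp [hL])
    obtain ⟨x₂, hx₂, hx₂'⟩ := (L 2).exists_mem_notMem_of_length_lt [c, x₁] (by simp [hL])
    obtain ⟨z, hz, hz'⟩ := (L 6).exists_mem_notMem_of_length_lt [c, g, x₁, x₂] (by simp [hL])
    exact listColorable_of_colors g x₁ x₂ g c c z (by grind)
  exact listColorable_of_mem_four_five_of_mem_six hL hc4 hc5 hc6 h02 h13 h03

theorem listColorable_of_mem_one_four_of_notMem (hL : IsTight L) (h45 : Disjoint (L 4) (L 5))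
    {e a : ℕ} (he1 : e ∈ L 1) (he4 : e ∈ L 4) (hae : a ≠ e) (ha : a ∈ L 0 ∨ a ∈ L 2)
    (ha56 : a ∉ L 5 ∨ a ∉ L 6) : K1N6.ListColorable L := by
  have he5 : e ∉ L 5 := disjoint_left.1 h45 he4
  rcases ha with ha0 | ha2 <;> rcases ha56 with ha5 | ha6
  · obtain ⟨x₂, hx₂, hx₂'⟩ := (L 2).exists_mem_notMem_of_length_lt [e] (by simp [hL])
    obtain ⟨x₃, hx₃, hx₃'⟩ := (L 3).exists_mem_notMem_of_length_lt [e, x₂] (by simp [hL])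
    obtain ⟨z, hz, hz'⟩ := (L 6).exists_mem_notMem_of_length_lt [e, a, x₂, x₃] (by simp [hL])
    obtain ⟨y, hy, hy'⟩ := (L 5).exists_mem_notMem_of_length_lt [x₂, x₃, z] (by simp [hL])
    exact listColorable_of_colors a e x₂ x₃ e y z (by grind)
  · obtain ⟨x₂, hx₂, hx₂'⟩ := (L 2).exists_mem_notMem_of_length_lt [e] (by simp [hL])
    obtain ⟨x₃, hx₃, hx₃'⟩ := (L 3).exists_mem_notMem_of_length_lt [e, x₂] (by simp [hL])
    obtain ⟨y, hy, hy'⟩ := (L 5).exists_mem_notMem_of_length_lt [a, x₂, x₃] (by simp [hL])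
    obtain ⟨z, hz, hz'⟩ := (L 6).exists_mem_notMem_of_length_lt [e, x₂, x₃, y] (by simp [hL])
    exact listColorable_of_colors a e x₂ x₃ e y z (by grind)
  · obtain ⟨x₀, hx₀, hx₀'⟩ := (L 0).exists_mem_notMem_of_length_lt [e] (by simp [hL])
    obtain ⟨x₃, hx₃, hx₃'⟩ := (L 3).exists_mem_notMem_of_length_lt [e, a] (by simp [hL])
    obtain ⟨z, hz, hz'⟩ := (L 6).exists_mem_notMem_of_length_lt [e, x₀, a, x₃] (by simp [hL])
    obtain ⟨y, hy, hy'⟩ := (L 5).exists_mem_notMem_of_length_lt [x₀, x₃, z] (by simp [hL])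
    exact listColorable_of_colors x₀ e a x₃ e y z (by grind)
  · obtain ⟨x₀, hx₀, hx₀'⟩ := (L 0).exists_mem_notMem_of_length_lt [e] (by simp [hL])
    obtain ⟨x₃, hx₃, hx₃'⟩ := (L 3).exists_mem_notMem_of_length_lt [e, a] (by simp [hL])
    obtain ⟨y, hy, hy'⟩ := (L 5).exists_mem_notMem_of_length_lt [x₀, a, x₃] (by simp [hL])
    obtain ⟨z, hz, hz'⟩ := (L 6).exists_mem_notMem_of_length_lt [e, x₀, x₃, y] (by simp [hL])
    exact listColorable_of_colors x₀ e a x₃ e y z (by grind)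

theorem listColorable_of_mem_zero_two_of_notMem_six (hL : IsTight L) {e t : ℕ} (he0 : e ∈ L 0)
    (he2 : e ∈ L 2) (he5 : e ∉ L 5) (ht4 : t ∈ L 4) (hte : t ≠ e) (ht6 : t ∉ L 6) :
    K1N6.ListColorable L := by
  obtain ⟨x₁, hx₁, hx₁'⟩ := (L 1).exists_mem_notMem_of_length_lt [e] (by simp [hL])
  obtain ⟨x₃, hx₃, hx₃'⟩ := (L 3).exists_mem_notMem_of_length_lt [e, t] (by simp [hL])
  obtain ⟨y, hy, hy'⟩ := (L 5).exists_mem_notMem_of_length_lt [x₁, x₃] (by simp [hL])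
  obtain ⟨z, hz, hz'⟩ := (L 6).exists_mem_notMem_of_length_lt [e, x₁, x₃, y] (by simp [hL])
  exact listColorable_of_colors e x₁ e x₃ t y z (by grind)

theorem listColorable_of_mem_one_four_of_mem_six (hL : IsTight L) (h45 : Disjoint (L 4) (L 5))
    {e : ℕ} (he1 : e ∈ L 1) (he4 : e ∈ L 4) (he6 : e ∈ L 6) (h02 : L 0 ∩ L 2 ⊆ {e}) :
    K1N6.ListColorable L := by
  have escape {a : ℕ} := listColorable_of_mem_one_four_of_notMem hL h45 he1 he4 (a := a)
  by_cases h06 : L 0 ⊆ L 6; swap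
  · obtain ⟨a, ha0, ha6⟩ := not_subset.1 h06
    exact escape (ne_of_mem_of_not_mem he6 ha6).symm (.inl ha0) (.inr ha6)
  by_cases h26 : L 2 ⊆ L 6; swap
  · obtain ⟨a, ha2, ha6⟩ := not_subset.1 h26
    exact escape (ne_of_mem_of_not_mem he6 ha6).symm (.inr ha2) (.inr ha6)
  by_cases h05 : (L 0).erase e ⊆ L 5; swap
  · obtain ⟨a, ha, ha5⟩ := not_subset.1 h05
    exact escape (ne_of_mem_erase ha) (.inl (mem_of_mem_erase ha)) (.inl ha5)
  by_cases h25 : (L 2).erase e ⊆ L 5; swap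
  · obtain ⟨a, ha, ha5⟩ := not_subset.1 h25
    exact escape (ne_of_mem_erase ha) (.inr (mem_of_mem_erase ha)) (.inl ha5)
  -- `L 0` and `L 2` are 3-sets inside the 5-set `L 6` meeting at most in `e`.
  obtain ⟨he02, h026⟩ := mem_inter_and_union_eq_of_card_le (union_subset h06 h26) h02 (by simp [hL])
  rw [mem_inter] at he02
  obtain ⟨t, ht4, hte⟩ := (L 4).exists_mem_notMem_of_length_lt [e] (by simp [hL])
  have hte : t ≠ e := by simpa using hte
  refine listColorable_of_mem_zero_two_of_notMem_six hL he02.1 he02.2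
    (disjoint_left.1 h45 he4) ht4 hte ?_
  rw [← h026, mem_union]
  rintro (ht0 | ht2)
  · exact disjoint_left.1 h45 ht4 (h05 (mem_erase.2 ⟨hte, ht0⟩))
  · exact disjoint_left.1 h45 ht4 (h25 (mem_erase.2 ⟨hte, ht2⟩))

theorem listColorable_of_mem_one_four (hL : IsTight L) (h45 : Disjoint (L 4) (L 5)) {e : ℕ}
    (he1 : e ∈ L 1) (he4 : e ∈ L 4) : K1N6.ListColorable L := by
  have he5 : e ∉ L 5 := disjoint_left.1 h45 he4
  by_cases he6 : e ∈ L 6; swap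
  · obtain ⟨x₀, hx₀, hx₀'⟩ := (L 0).exists_mem_notMem_of_length_lt [e] (by simp [hL])
    obtain ⟨x₂, hx₂, hx₂'⟩ := (L 2).exists_mem_notMem_of_length_lt [e] (by simp [hL])
    obtain ⟨x₃, hx₃, hx₃'⟩ := (L 3).exists_mem_notMem_of_length_lt [e, x₂] (by simp [hL])
    obtain ⟨y, hy, hy'⟩ := (L 5).exists_mem_notMem_of_length_lt [x₀, x₂, x₃] (by simp [hL])
    obtain ⟨z, hz, hz'⟩ := (L 6).exists_mem_notMem_of_length_lt [x₀, x₂, x₃, y] (by simp [hL])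
    exact listColorable_of_colors x₀ e x₂ x₃ e y z (by grind)
  by_cases h02 : L 0 ∩ L 2 ⊆ {e}; swap
  · obtain ⟨g, hg, hge⟩ := not_subset.1 h02
    rw [mem_inter] at hg; rw [mem_singleton] at hge
    obtain ⟨x₃, hx₃, hx₃'⟩ := (L 3).exists_mem_notMem_of_length_lt [e, g] (by simp [hL])
    obtain ⟨y, hy, hy'⟩ := (L 5).exists_mem_notMem_of_length_lt [g, x₃] (by simp [hL])
    obtain ⟨z, hz, hz'⟩ := (L 6).exists_mem_notMem_of_length_lt [e, g, x₃, y] (by simp [hL])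
    exact listColorable_of_colors g e g x₃ e y z (by grind)
  exact listColorable_of_mem_one_four_of_mem_six hL h45 he1 he4 he6 h02

theorem listColorable_of_four_subset_zero_three (hL : IsTight L) (h14 : Disjoint (L 1) (L 4))
    (h24 : Disjoint (L 2) (L 4)) (h45 : Disjoint (L 4) (L 5)) (h0 : L 4 ⊆ L 0)
    (h3 : L 4 ⊆ L 3) : K1N6.ListColorable L := by
  by_cases h46 : L 4 ⊆ L 6
  · obtain ⟨t, ht, -⟩ := (L 4).exists_mem_notMem_of_length_lt [] (by simp [hL])
    obtain ⟨t', ht', ht''⟩ := (L 4).exists_mem_notMem_of_length_lt [t] (by simp [hL])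
    obtain ⟨y, hy, hy6⟩ := exists_mem_notMem_of_card_lt_card
      (by simp [card_sdiff_of_subset h46, hL] : #(L 6 \ L 4) < #(L 5))
    have hy4 := disjoint_right.1 h45 hy
    rw [mem_sdiff, not_and_not_right] at hy6
    obtain ⟨x₁, hx₁, hx₁'⟩ := (L 1).exists_mem_notMem_of_length_lt [y] (by simp [hL])
    obtain ⟨x₂, hx₂, hx₂'⟩ := (L 2).exists_mem_notMem_of_length_lt [y, x₁] (by simp [hL])
    obtain ⟨z, hz, hz'⟩ := (L 6).exists_mem_notMem_of_length_lt [t, t', x₁, x₂] (by simp [hL])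
    have := disjoint_left.1 h14 hx₁
    have := disjoint_left.1 h24 hx₂
    exact listColorable_of_colors t x₁ x₂ t t' y z (by grind)
  · obtain ⟨t, ht, ht6⟩ := not_subset.1 h46
    obtain ⟨t', ht', ht''⟩ := (L 4).exists_mem_notMem_of_length_lt [t] (by simp [hL])
    obtain ⟨y, hy, -⟩ := (L 5).exists_mem_notMem_of_length_lt [] (by simp [hL])
    obtain ⟨x₁, hx₁, hx₁'⟩ := (L 1).exists_mem_notMem_of_length_lt [y] (by simp [hL])
    obtain ⟨x₂, hx₂, hx₂'⟩ := (L 2).exists_mem_notMem_of_length_lt [y, x₁] (by simp [hL])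
    obtain ⟨z, hz, hz'⟩ := (L 6).exists_mem_notMem_of_length_lt [t', x₁, x₂, y] (by simp [hL])
    have := disjoint_left.1 h14 hx₁
    have := disjoint_left.1 h24 hx₂
    have := disjoint_right.1 h45 hy
    exact listColorable_of_colors t x₁ x₂ t t' y z (by grind)

theorem listColorable_of_mem_four_six (hL : IsTight L) (h14 : Disjoint (L 1) (L 4))
    (h24 : Disjoint (L 2) (L 4)) (h45 : Disjoint (L 4) (L 5)) {t t' : ℕ} (ht : t ∈ L 4)
    (ht' : t' ∈ L 4) (htt' : t ≠ t') (ht'6 : t' ∈ L 6) (h3 : 2 ≤ #(L 3 \ L 4)) :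
    K1N6.ListColorable L := by
  -- The apex takes `t'` and `4` takes `t`; neither lies in the lists of `1`, `2`, `5`, and `0`, `3`
  -- avoid both, so what is left is a fan on `0 1 2 3` with apex `5`.
  have h0 : (L 0 \ L 4).Nonempty := by simpa [hL] using le_card_sdiff (L 4) (L 0)
  obtain ⟨c₀, hc₀, c₁, hc₁, c₂, hc₂, c₃, hc₃, y, hy, hne⟩ :=
    exists_fan_coloring h0 (by simp [hL] : 3 ≤ #(L 1)) (by simp [hL] : 3 ≤ #(L 2)) h3
      (by simp [hL] : 4 ≤ #(L 5))
  rw [mem_sdiff] at hc₀ hc₃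
  have := disjoint_left.1 h14 hc₁
  have := disjoint_left.1 h24 hc₂
  have := disjoint_right.1 h45 hy
  exact listColorable_of_colors c₀ c₁ c₂ c₃ t y t' (by grind)

theorem listColorable_of_mem_zero_four (hL : IsTight L) (h14 : Disjoint (L 1) (L 4))
    (h45 : Disjoint (L 4) (L 5)) (h46 : Disjoint (L 4) (L 6)) {t : ℕ} (ht0 : t ∈ L 0)
    (ht4 : t ∈ L 4) : K1N6.ListColorable L := by
  obtain ⟨t', ht', ht''⟩ := (L 4).exists_mem_notMem_of_length_lt [t] (by simp [hL])
  obtain ⟨x₁, hx₁, -⟩ := (L 1).exists_mem_notMem_of_length_lt [] (by simp [hL])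
  obtain ⟨x₂, hx₂, hx₂'⟩ := (L 2).exists_mem_notMem_of_length_lt [x₁] (by simp [hL])
  obtain ⟨x₃, hx₃, hx₃'⟩ := (L 3).exists_mem_notMem_of_length_lt [x₂, t'] (by simp [hL])
  obtain ⟨y, hy, hy'⟩ := (L 5).exists_mem_notMem_of_length_lt [x₁, x₂, x₃] (by simp [hL])
  obtain ⟨z, hz, hz'⟩ := (L 6).exists_mem_notMem_of_length_lt [x₁, x₂, x₃, y] (by simp [hL])
  have := disjoint_left.1 h14 hx₁
  have := disjoint_left.1 h45 ht4
  have := disjoint_left.1 h46 ht4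
  have := disjoint_left.1 h46 ht'
  exact listColorable_of_colors t x₁ x₂ x₃ t' y z (by grind)

theorem listColorable_of_mem_four_notMem (hL : IsTight L) {t : ℕ} (ht4 : t ∈ L 4)
    (ht0 : t ∉ L 0) (ht3 : t ∉ L 3) (ht6 : t ∉ L 6) : K1N6.ListColorable L := by
  by_cases h13 : Disjoint (L 1) (L 3); swap
  · obtain ⟨g, hg₁, hg₃⟩ := not_disjoint_iff.1 h13
    obtain ⟨x₀, hx₀, hx₀'⟩ := (L 0).exists_mem_notMem_of_length_lt [g] (by simp [hL])
    obtain ⟨x₂, hx₂, hx₂'⟩ := (L 2).exists_mem_notMem_of_length_lt [g] (by simp [hL])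
    obtain ⟨y, hy, hy'⟩ := (L 5).exists_mem_notMem_of_length_lt [x₀, g, x₂] (by simp [hL])
    obtain ⟨z, hz, hz'⟩ := (L 6).exists_mem_notMem_of_length_lt [x₀, g, x₂, y] (by simp [hL])
    exact listColorable_of_colors x₀ g x₂ g t y z (by grind)
  -- The apex takes a colour outside `L 5`, so `5` keeps four colours against its four
  -- neighbours on the cycle, and a colour of `L 1` or `L 3` outside `L 5` saves one of them.
  obtain ⟨z, hz, hz5⟩ := exists_mem_notMem_of_card_lt_card (by simp [hL] : #(L 5) < #(L 6))
  by_cases h1 : L 1 ⊆ insert z (L 5); swap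
  · obtain ⟨a, ha1, ha⟩ := not_subset.1 h1
    rw [mem_insert, not_or] at ha
    obtain ⟨x₀, hx₀, hx₀'⟩ := (L 0).exists_mem_notMem_of_length_lt [z, a] (by simp [hL])
    obtain ⟨x₂, hx₂, hx₂'⟩ := (L 2).exists_mem_notMem_of_length_lt [z, a] (by simp [hL])
    obtain ⟨x₃, hx₃, hx₃'⟩ := (L 3).exists_mem_notMem_of_length_lt [z, x₂] (by simp [hL])
    obtain ⟨y, hy, hy'⟩ := (L 5).exists_mem_notMem_of_length_lt [x₀, x₂, x₃] (by simp [hL])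
    exact listColorable_of_colors x₀ a x₂ x₃ t y z (by grind)
  by_cases h3 : L 3 ⊆ insert z (L 5); swap
  · obtain ⟨a, ha3, ha⟩ := not_subset.1 h3
    rw [mem_insert, not_or] at ha
    obtain ⟨x₂, hx₂, hx₂'⟩ := (L 2).exists_mem_notMem_of_length_lt [z, a] (by simp [hL])
    obtain ⟨x₁, hx₁, hx₁'⟩ := (L 1).exists_mem_notMem_of_length_lt [z, x₂] (by simp [hL])
    obtain ⟨x₀, hx₀, hx₀'⟩ := (L 0).exists_mem_notMem_of_length_lt [z, x₁] (by simp [hL])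
    obtain ⟨y, hy, hy'⟩ := (L 5).exists_mem_notMem_of_length_lt [x₀, x₁, x₂] (by simp [hL])
    exact listColorable_of_colors x₀ x₁ x₂ a t y z (by grind)
  have h13' := card_add_card_le_of_disjoint h1 h3 h13
  have h5 := card_insert_le z (L 5)
  simp [hL] at h13' h5
  omega

theorem listColorable_of_disjoint_four (hL : IsTight L) (h14 : Disjoint (L 1) (L 4))
    (h24 : Disjoint (L 2) (L 4)) (h45 : Disjoint (L 4) (L 5)) : K1N6.ListColorable L := by
  by_cases h03 : L 4 ⊆ L 0 ∧ L 4 ⊆ L 3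
  · exact listColorable_of_four_subset_zero_three hL h14 h24 h45 h03.1 h03.2
  by_cases h46 : Disjoint (L 4) (L 6); swap
  · obtain ⟨t', ht', ht'6⟩ := not_disjoint_iff.1 h46
    obtain ⟨t, ht, htt'⟩ := (L 4).exists_mem_notMem_of_length_lt [t'] (by simp [hL])
    have htt' : t ≠ t' := by simpa using htt'
    have two_le (i : Fin 7) (hi : #(L i) = 3) (h : ¬L 4 ⊆ L i) : 2 ≤ #(L i \ L 4) := by
      have := card_lt_card_sdiff_add_card h
      rw [hi, hL 4] at this
      simp at this
      omega
    rcases not_and_or.1 h03 with h0 | h3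
    · exact listColorable_of_comp_mirror <| listColorable_of_mem_four_six hL.comp_mirror h24 h14
        h45 ht ht' htt' ht'6 (two_le 0 (hL 0) h0)
    · exact listColorable_of_mem_four_six hL h14 h24 h45 ht ht' htt' ht'6 (two_le 3 (hL 3) h3)
  by_cases h04 : Disjoint (L 0) (L 4); swap
  · obtain ⟨t, ht0, ht4⟩ := not_disjoint_iff.1 h04
    exact listColorable_of_mem_zero_four hL h14 h45 h46 ht0 ht4
  by_cases h34 : Disjoint (L 3) (L 4); swap
  · obtain ⟨t, ht3, ht4⟩ := not_disjoint_iff.1 h34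
    exact listColorable_of_comp_mirror <|
      listColorable_of_mem_zero_four hL.comp_mirror h24 h45 h46 ht3 ht4
  obtain ⟨t, ht4, -⟩ := (L 4).exists_mem_notMem_of_length_lt [] (by simp [hL])
  exact listColorable_of_mem_four_notMem hL ht4 (disjoint_right.1 h04 ht4)
    (disjoint_right.1 h34 ht4) (disjoint_left.1 h46 ht4)

theorem listColorable_of_isTight (hL : IsTight L) : K1N6.ListColorable L := by
  by_cases h45 : Disjoint (L 4) (L 5); swap
  · obtain ⟨c, hc4, hc5⟩ := not_disjoint_iff.1 h45
    exact listColorable_of_mem_four_five hL hc4 hc5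
  by_cases h14 : Disjoint (L 1) (L 4); swap
  · obtain ⟨e, he1, he4⟩ := not_disjoint_iff.1 h14
    exact listColorable_of_mem_one_four hL h45 he1 he4
  by_cases h24 : Disjoint (L 2) (L 4); swap
  · obtain ⟨e, he2, he4⟩ := not_disjoint_iff.1 h24
    exact listColorable_of_comp_mirror (listColorable_of_mem_one_four hL.comp_mirror h45 he2 he4)
  exact listColorable_of_disjoint_four hL h14 h24 h45

end K1N6

/-- `K_1 * N_6` is `d_1`-choosable. -/
theorem stmt3 (L : Fin 7 → Finset ℕ) (hL : ∀ v, deg K1N6 v - 1 ≤ (L v).card) :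
    ∃ c : Fin 7 → ℕ, (∀ v, c v ∈ L v) ∧ ∀ u v, K1N6.Adj u v → c u ≠ c v := by
  obtain ⟨L', hL', hsub⟩ := K1N6.exists_isTight_subset hL
  exact (K1N6.listColorable_of_isTight hL').mono hsub
end

section
/- For every integer t ≥ 1, the graph G_t = K_t * C_5 (the join of a complete graph on t vertices with a 5-cycle) satisfies χ(G_t) = t + 3, ω(G_t) = t + 2, Δ(G_t) = t + 4, and G_t is claw-free. -/
/-- The join of two graphs: disjoint union plus all edges in between. -/
def join {α β : Type*} (A : SimpleGraph α) (B : SimpleGraph β) :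
    SimpleGraph (α ⊕ β) where
  Adj u v :=
    match u, v with
    | Sum.inl a, Sum.inl a' => A.Adj a a'
    | Sum.inr b, Sum.inr b' => B.Adj b b'
    | _, _ => True
  symm := by
    constructor
    rintro (a | a) (b | b) h
    · exact A.adj_symm h
    · trivial
    · trivial
    · exact B.adj_symm h
  loopless := by
    constructor
    rintro (a | a) h
    · exact A.irrefl h
    · exact B.irrefl h

/-- Maximum degree. -/
noncomputable def maxDeg {α : Type*} (G : SimpleGraph α) : ℕ :=
  sSup (Set.range (deg G))

/-- Clique number. -/
noncomputable def cliqueNum {α : Type*} (G : SimpleGraph α) : ℕ :=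
  sSup {n | ∃ S : Finset α, G.IsNClique n S}

/-- Claw-free: no induced `K_{1,3}`. -/
def ClawFree {V : Type*} (G : SimpleGraph V) : Prop :=
  ∀ v a b c : V, G.Adj v a → G.Adj v b → G.Adj v c →
    ¬G.Adj a b → ¬G.Adj a c → ¬G.Adj b c → a = b ∨ a = c ∨ b = c

/-- The 5-cycle. -/
def C5 : SimpleGraph (Fin 5) := SimpleGraph.fromRel (fun i j => j = i + 1)

/-! The chromatic number of `K_t * C_5` is `t + 3` because the `t` colours of `K_t` are unavailable
to `C_5`, an odd cycle, which needs three more. A clique of a join splits into cliques of its two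
sides, and `C_5` is triangle-free, so `ω = t + 2`. A vertex of `K_t` sees the other `t - 1` and all
five cycle vertices, the most of any vertex. Two leaves of a claw on different sides of a join are
adjacent, so the three leaves lie on one side; but neither `K_t` nor `C_5` has three pairwise
non-adjacent vertices. -/

namespace SimpleGraph

variable {α : Type*}

lemma cliqueNum_lt_of_cliqueFree {G : SimpleGraph α} {n : ℕ} (h : G.CliqueFree n) :
    G.cliqueNum < n := by
  obtain ⟨s, hs⟩ := G.exists_isNClique_cliqueNum
  by_contra! hle
  exact hs.not_cliqueFree (h.mono hle)

lemma cliqueFree_three_of_forall_not_triangle {G : SimpleGraph α}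
    (h : ∀ a b c, G.Adj a b → G.Adj a c → G.Adj b c → False) : G.CliqueFree 3 := by
  classical
  intro s hs
  obtain ⟨a, b, c, hab, hac, hbc, -⟩ := is3Clique_iff.mp hs
  exact h a b c hab hac hbc

lemma cliqueNum_top [Fintype α] : (⊤ : SimpleGraph α).cliqueNum = Fintype.card α := by
  apply le_antisymm
  · obtain ⟨s, hs⟩ := (⊤ : SimpleGraph α).exists_isNClique_cliqueNum
    exact hs.card_eq ▸ Finset.card_le_univ s
  · exact IsClique.card_le_cliqueNum (tc := by simp)

lemma indepSetFree_top {n : ℕ} (hn : 2 ≤ n) : (⊤ : SimpleGraph α).IndepSetFree n := by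
  simpa using (indepSetFree_compl (G := ⊥)).mpr (cliqueFree_bot hn)

lemma IndepSetFree.eq_or_eq_or_eq {G : SimpleGraph α}
    (hG : G.IndepSetFree 3) {a b c : α} (hab : ¬G.Adj a b) (hac : ¬G.Adj a c)
    (hbc : ¬G.Adj b c) : a = b ∨ a = c ∨ b = c := by
  classical
  by_contra! hne
  apply hG {a, b, c}
  rw [← isNClique_compl, is3Clique_triple_iff]
  simp [hab, hac, hbc, hne.1, hne.2.1, hne.2.2]

end SimpleGraph

lemma cliqueNum_eq_simpleGraph_cliqueNum {V : Type*} (G : SimpleGraph V) :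
    cliqueNum G = G.cliqueNum :=
  rfl

lemma deg_top {α : Type*} [Finite α] (a : α) :
    deg (⊤ : SimpleGraph α) a = Nat.card α - 1 := by
  rw [deg, SimpleGraph.neighborSet_top, Set.ncard_compl, Set.ncard_singleton]

section Join

open SimpleGraph

variable {α β : Type*} {A : SimpleGraph α} {B : SimpleGraph β}

@[simp] lemma join_adj_inl_inl {a a' : α} : (join A B).Adj (.inl a) (.inl a') ↔ A.Adj a a' :=
  Iff.rfl

@[simp] lemma join_adj_inr_inr {b b' : β} : (join A B).Adj (.inr b) (.inr b') ↔ B.Adj b b' :=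
  Iff.rfl

@[simp] lemma join_adj_inl_inr {a : α} {b : β} : (join A B).Adj (.inl a) (.inr b) := trivial

@[simp] lemma join_adj_inr_inl {a : α} {b : β} : (join A B).Adj (.inr b) (.inl a) := trivial

lemma colorable_join {n m : ℕ} (hA : A.Colorable n) (hB : B.Colorable m) :
    (join A B).Colorable (n + m) := by
  obtain ⟨cA⟩ := hA
  obtain ⟨cB⟩ := hB
  let c : (join A B).Coloring (Fin n ⊕ Fin m) := Coloring.mk (Sum.map cA cB) <| by
    rintro (a | b) (a' | b') h
    · simpa using cA.valid h
    · simp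
    · simp
    · simpa using cB.valid h
  simpa using c.colorable

lemma colorable_of_colorable_join {t k : ℕ} {s : Finset α} (hs : A.IsNClique t s)
    (h : (join A B).Colorable (t + k)) : B.Colorable k := by
  classical
  obtain ⟨c⟩ := h
  set used := s.image (fun a => c (.inl a))
  have hused : used.card = t := by
    rw [Finset.card_image_of_injOn, hs.card_eq]
    intro a ha a' ha' hc
    by_contra hne
    exact c.valid (join_adj_inl_inl.mpr (hs.isClique ha ha' hne)) hc
  have hfree (b : β) : c (.inr b) ∈ usedᶜ := by
    rw [Finset.mem_compl, Finset.mem_image]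
    rintro ⟨a, -, ha⟩
    exact c.valid (join_adj_inl_inr (b := b)) ha
  let cB : B.Coloring ↥usedᶜ := Coloring.mk (fun b => ⟨c (.inr b), hfree b⟩) <| by
    intro b b' h hc
    exact c.valid (join_adj_inr_inr.mpr h) (Subtype.ext_iff.mp hc)
  simpa [Finset.card_compl, hused] using cB.colorable

lemma chromaticNumber_join_top [Fintype α] {k : ℕ} (hB : B.chromaticNumber = k + 1) :
    (join (⊤ : SimpleGraph α) B).chromaticNumber = (Fintype.card α + k : ℕ) + 1 := by
  rw [chromaticNumber_eq_iff_colorable_not_colorable] at hB ⊢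
  have hK : (⊤ : SimpleGraph α).IsNClique (Fintype.card α) Finset.univ :=
    ⟨by simp, Finset.card_univ⟩
  refine ⟨?_, fun h => hB.2 (colorable_of_colorable_join hK h)⟩
  rw [add_assoc]
  exact colorable_join (colorable_of_fintype ⊤) hB.1

lemma isClique_join_iff {S : Finset (α ⊕ β)} :
    (join A B).IsClique (S : Set (α ⊕ β)) ↔
      A.IsClique (S.toLeft : Set α) ∧ B.IsClique (S.toRight : Set β) := by
  constructor
  · intro h
    refine ⟨fun a ha a' ha' hne => ?_, fun b hb b' hb' hne => ?_⟩
    · simpa using h (Finset.mem_toLeft.mp ha) (Finset.mem_toLeft.mp ha') (by simpa using hne)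
    · simpa using h (Finset.mem_toRight.mp hb) (Finset.mem_toRight.mp hb') (by simpa using hne)
  · rintro ⟨hA, hB⟩ (a | b) hx (a' | b') hy hne
    · simpa using hA (Finset.mem_toLeft.mpr hx) (Finset.mem_toLeft.mpr hy) (by simpa using hne)
    · simp
    · simp
    · simpa using hB (Finset.mem_toRight.mpr hx) (Finset.mem_toRight.mpr hy) (by simpa using hne)

lemma cliqueNum_join [Finite α] [Finite β] :
    (join A B).cliqueNum = A.cliqueNum + B.cliqueNum := by
  apply le_antisymm
  · obtain ⟨S, hS⟩ := (join A B).exists_isNClique_cliqueNum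
    obtain ⟨hA, hB⟩ := isClique_join_iff.mp hS.isClique
    rw [← hS.card_eq, ← Finset.card_toLeft_add_card_toRight]
    exact add_le_add (IsClique.card_le_cliqueNum (tc := hA))
      (IsClique.card_le_cliqueNum (tc := hB))
  · obtain ⟨s, hs⟩ := A.exists_isNClique_cliqueNum
    obtain ⟨u, hu⟩ := B.exists_isNClique_cliqueNum
    have hsu : (join A B).IsClique (s.disjSum u : Set (α ⊕ β)) :=
      isClique_join_iff.mpr (by simpa using ⟨hs.isClique, hu.isClique⟩)
    rw [← hs.card_eq, ← hu.card_eq, ← Finset.card_disjSum]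
    exact IsClique.card_le_cliqueNum (tc := hsu)

lemma deg_join_inl [Finite α] [Finite β] (a : α) :
    deg (join A B) (.inl a) = deg A a + Nat.card β := by
  have hN : (join A B).neighborSet (.inl a) = .inl '' A.neighborSet a ∪ Set.range .inr := by
    ext (a' | b) <;> simp
  rw [deg, hN, Set.ncard_union_eq (by simp [Set.disjoint_left]),
    Set.ncard_image_of_injective _ Sum.inl_injective,
    Set.ncard_range_of_injective Sum.inr_injective, deg]

lemma deg_join_inr [Finite α] [Finite β] (b : β) :
    deg (join A B) (.inr b) = Nat.card α + deg B b := by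
  have hN : (join A B).neighborSet (.inr b) = Set.range .inl ∪ .inr '' B.neighborSet b := by
    ext (a | b') <;> simp
  rw [deg, hN, Set.ncard_union_eq (by simp [Set.disjoint_left]),
    Set.ncard_image_of_injective _ Sum.inr_injective,
    Set.ncard_range_of_injective Sum.inl_injective, deg]

lemma clawFree_join (hA : A.IndepSetFree 3) (hB : B.IndepSetFree 3) : ClawFree (join A B) := by
  rintro - (a | b) (a' | b') (a'' | b'') - - - h₁ h₂ h₃ <;>
    simp only [join_adj_inl_inl, join_adj_inr_inr, join_adj_inl_inr, join_adj_inr_inl,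
      not_true_eq_false] at h₁ h₂ h₃
  · simpa using hA.eq_or_eq_or_eq h₁ h₂ h₃
  · simpa using hB.eq_or_eq_or_eq h₁ h₂ h₃

end Join

section C5

open SimpleGraph

theorem C5_eq_cycleGraph : C5 = cycleGraph 5 := by
  ext i j
  simp only [C5, fromRel_adj, cycleGraph_adj]
  revert i j
  decide

lemma chromaticNumber_C5 : C5.chromaticNumber = 3 := by
  rw [C5_eq_cycleGraph]
  exact chromaticNumber_cycleGraph_of_odd 5 (by norm_num) (by decide)

lemma deg_C5 (b : Fin 5) : deg C5 b = 2 := by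
  rw [C5_eq_cycleGraph, deg, Set.ncard_eq_toFinset_card', Set.toFinset_card,
    card_neighborSet_eq_degree]
  exact cycleGraph_degree_three_le

lemma cliqueFree_three_C5 : C5.CliqueFree 3 :=
  cliqueFree_three_of_forall_not_triangle <| by
    simp only [C5_eq_cycleGraph, cycleGraph_adj]
    decide

lemma indepSetFree_three_C5 : C5.IndepSetFree 3 := by
  rw [← cliqueFree_compl]
  refine cliqueFree_three_of_forall_not_triangle ?_
  simp only [compl_adj, C5_eq_cycleGraph, cycleGraph_adj]
  decide

lemma cliqueNum_C5 : C5.cliqueNum = 2 := by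
  refine le_antisymm (Nat.lt_succ_iff.mp (cliqueNum_lt_of_cliqueFree cliqueFree_three_C5)) ?_
  have h01 : C5.IsClique ({0, 1} : Finset (Fin 5)) := by
    rw [Finset.coe_pair, isClique_pair, C5_eq_cycleGraph, cycleGraph_adj]
    decide
  exact IsClique.card_le_cliqueNum (tc := h01)

end C5

lemma maxDeg_join_top_C5 {t : ℕ} (ht : 1 ≤ t) :
    maxDeg (join (⊤ : SimpleGraph (Fin t)) C5) = t + 4 := by
  have hinl (a : Fin t) : deg (join (⊤ : SimpleGraph (Fin t)) C5) (.inl a) = t + 4 := by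
    rw [deg_join_inl, deg_top]
    simp only [Nat.card_eq_fintype_card, Fintype.card_fin]
    omega
  have hinr (b : Fin 5) : deg (join (⊤ : SimpleGraph (Fin t)) C5) (.inr b) = t + 2 := by
    rw [deg_join_inr, deg_C5, Nat.card_eq_fintype_card, Fintype.card_fin]
  refine IsGreatest.csSup_eq ⟨⟨.inl ⟨0, ht⟩, hinl _⟩, ?_⟩
  rintro _ ⟨a | b, rfl⟩
  · exact (hinl a).le
  · rw [hinr]
    omega

/-- For `t ≥ 1`, `G_t = K_t * C_5` has `χ = t + 3`, `ω = t + 2`, `Δ = t + 4`, and is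
claw-free. -/
theorem stmt10 (t : ℕ) (ht : 1 ≤ t) :
    (join (⊤ : SimpleGraph (Fin t)) C5).chromaticNumber = ((t + 3 : ℕ) : ℕ∞) ∧
    cliqueNum (join (⊤ : SimpleGraph (Fin t)) C5) = t + 2 ∧
    maxDeg (join (⊤ : SimpleGraph (Fin t)) C5) = t + 4 ∧
    ClawFree (join (⊤ : SimpleGraph (Fin t)) C5) := by
  refine ⟨?_, ?_, maxDeg_join_top_C5 ht,
    clawFree_join (SimpleGraph.indepSetFree_top (by norm_num)) indepSetFree_three_C5⟩
  · rw [chromaticNumber_join_top (k := 2) (by rw [chromaticNumber_C5]; rfl), Fintype.card_fin]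
    rfl
  · rw [cliqueNum_eq_simpleGraph_cliqueNum, cliqueNum_join, SimpleGraph.cliqueNum_top,
      cliqueNum_C5, Fintype.card_fin]
end

section
/- Let B be a bipartite multigraph. Then B is edge-f-choosable where f(e) := max{d(x), d(y)} for each edge e = xy: for every assignment of lists L(e) with |L(e)| ≥ max{d(x), d(y)}, there is a proper edge coloring of B choosing each edge's color from its list. -/
/-!
A bipartite multigraph is given by its edges `E` and the endpoint maps `a : E → A`, `b : E → B`
into its two sides.

Galvin's kernel method: rank the edges at every vertex, and say that `f` outranks `e` if they
share an endpoint at which `f` has the higher rank. Every set of edges has a stable matching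
(Gale–Shapley): a matching by which every other edge of the set is outranked. It can take a
single colour, so colouring one colour at a time succeeds as soon as every edge `e` is outranked by fewer than `|L e|`
edges.

It remains to rank the edges so that `e = xy` is outranked by fewer than `max (d x) (d y)`
edges. By induction, peel off a nonempty matching `M` and put its edges on top at their ends on
one side and at the bottom at their ends on the other. This works when every edge whose end on
the first side is covered by `M`, but whose other end is not, has its larger degree at the
covered end. Such an `M` is a single edge at a vertex of maximum degree unless some edges join
two vertices of maximum degree; among those, Hall's theorem matches the neighbourhood of a
minimal set `S` with `|N(S)| ≤ |S|` into `S`.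
-/

open Finset

namespace BipartiteListColoring

lemma card_filter_sdiff_lt_card_erase {ι α : Type*} [DecidableEq ι] [DecidableEq α]
    {out : ι → ι → Prop} [DecidableRel out] {F K : Finset ι} {L : ι → Finset α} {x : α}
    {e : ι} (hKF : K ⊆ F) (hL : #{f ∈ F | out e f} < #(L e))
    (habs : x ∈ L e → ∃ f ∈ K, out e f) :
    #{f ∈ F \ K | out e f} < #((L e).erase x) := by
  have hsub : {f ∈ F \ K | out e f} ⊆ {f ∈ F | out e f} := filter_subset_filter _ sdiff_subset
  by_cases hxe : x ∈ L e
  · obtain ⟨f, hfK, hef⟩ := habs hxe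
    have hlt : #{f ∈ F \ K | out e f} < #{f ∈ F | out e f} :=
      card_lt_card ((ssubset_iff_of_subset hsub).mpr ⟨f, mem_filter.mpr ⟨hKF hfK, hef⟩,
        fun h => (mem_sdiff.mp (mem_filter.mp h).1).2 hfK⟩)
    rw [card_erase_of_mem hxe]
    omega
  · rw [erase_eq_of_notMem hxe]
    exact (card_le_card hsub).trans_lt hL

theorem exists_listColoring_of_kernels {ι α : Type*} [Nonempty α]
    (conflict out : ι → ι → Prop) [DecidableRel out] (F : Finset ι)
    (hker : ∀ H ⊆ F, ∃ K ⊆ H, (K : Set ι).Pairwise (fun k k' => ¬conflict k k') ∧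
      ∀ e ∈ H, e ∉ K → ∃ f ∈ K, out e f)
    (L : ι → Finset α) (hL : ∀ e ∈ F, #{f ∈ F | out e f} < #(L e)) :
    ∃ c : ι → α, (∀ e ∈ F, c e ∈ L e) ∧
      (F : Set ι).Pairwise fun e f => conflict e f → c e ≠ c f := by
  classical
  induction F using Finset.strongInduction generalizing L with
  | H F ih =>
  rcases F.eq_empty_or_nonempty with rfl | ⟨e₀, he₀⟩
  · exact ⟨fun _ => Classical.arbitrary α, by simp, by simp⟩
  obtain ⟨x, hx⟩ : (L e₀).Nonempty := card_pos.mp (Nat.zero_lt_of_lt (hL e₀ he₀))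
  -- `K` receives the colour `x`; everything else is coloured from the lists without `x`.
  obtain ⟨K, hKH, hK, hKabs⟩ := hker {e ∈ F | x ∈ L e} (filter_subset _ _)
  have hKF : K ⊆ F := hKH.trans (filter_subset _ _)
  have hKne : K.Nonempty := by
    by_cases he₀K : e₀ ∈ K
    · exact ⟨e₀, he₀K⟩
    · obtain ⟨f, hf, -⟩ := hKabs e₀ (mem_filter.mpr ⟨he₀, hx⟩) he₀K
      exact ⟨f, hf⟩
  obtain ⟨c, hcL, hc⟩ := ih (F \ K) (sdiff_ssubset hKF hKne)
    (fun H hH => hker H (hH.trans sdiff_subset)) (fun e => (L e).erase x) fun e he =>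
      card_filter_sdiff_lt_card_erase hKF (hL e (mem_sdiff.mp he).1) fun hxe =>
        hKabs e (mem_filter.mpr ⟨(mem_sdiff.mp he).1, hxe⟩) (mem_sdiff.mp he).2
  have hcx : ∀ e ∈ F \ K, c e ≠ x := fun e he h => notMem_erase x (L e) (h ▸ hcL e he)
  refine ⟨fun e => if e ∈ K then x else c e, fun e he => ?_, fun e he f hf hef hconf => ?_⟩
  · by_cases heK : e ∈ K
    · simpa [heK] using (mem_filter.mp (hKH heK)).2
    · simpa [heK] using mem_of_mem_erase (hcL e (mem_sdiff.mpr ⟨he, heK⟩))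
  · have he' := fun heK : e ∉ K => mem_sdiff.mpr ⟨he, heK⟩
    have hf' := fun hfK : f ∉ K => mem_sdiff.mpr ⟨hf, hfK⟩
    by_cases heK : e ∈ K <;> by_cases hfK : f ∈ K <;> simp only [heK, hfK, if_true, if_false]
    · exact absurd hconf (hK heK hfK hef)
    · exact (hcx f (hf' hfK)).symm
    · exact hcx e (he' heK)
    · exact hc (he' heK) (hf' hfK) hef hconf

variable {E A B R : Type*}

def IsMatching (a : E → A) (b : E → B) (M : Finset E) : Prop :=
  (M : Set E).Pairwise fun e f => a e ≠ a f ∧ b e ≠ b f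

lemma IsMatching.swap {a : E → A} {b : E → B} {M : Finset E} (hM : IsMatching a b M) :
    IsMatching b a M :=
  hM.imp fun _ _ h => h.symm

lemma IsMatching.injOn {a : E → A} {b : E → B} {M : Finset E} (hM : IsMatching a b M) :
    Set.InjOn a M := fun e he f hf hef => by
  by_contra h
  exact (hM he hf h).1 hef

lemma injOn_ite [DecidableEq E] {a : E → A} {r : E → R} {F M : Finset E} {t : R}
    (hM : Set.InjOn a M)
    (hr : Set.InjOn (fun e => (a e, r e)) ↑(F \ M)) (ht : ∀ e ∈ F \ M, r e ≠ t) :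
    Set.InjOn (fun e => (a e, if e ∈ M then t else r e)) F := by
  intro e he f hf hef
  obtain ⟨ha, hr'⟩ := Prod.mk.inj hef
  by_cases heM : e ∈ M <;> by_cases hfM : f ∈ M <;>
    simp only [heM, hfM, if_true, if_false] at hr'
  · exact hM heM hfM ha
  · exact absurd hr'.symm (ht f (mem_sdiff.mpr ⟨hf, hfM⟩))
  · exact absurd hr' (ht e (mem_sdiff.mpr ⟨he, heM⟩))
  · exact hr (mem_sdiff.mpr ⟨he, heM⟩) (mem_sdiff.mpr ⟨hf, hfM⟩) (Prod.ext ha hr')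

variable [LinearOrder R]

def Outranks (a : E → A) (b : E → B) (ra rb : E → R) (f e : E) : Prop :=
  (a f = a e ∧ ra e < ra f) ∨ (b f = b e ∧ rb e < rb f)

def IsStableMatching (a : E → A) (b : E → B) (ra rb : E → R) (H K : Finset E) : Prop :=
  K ⊆ H ∧ IsMatching a b K ∧ ∀ e ∈ H, e ∉ K → ∃ f ∈ K, Outranks a b ra rb f e

/-- `g` is outranked by `e`, and `e`, being on top at its `a`-end, can only be outranked at its
`b`-end, by an edge that then outranks `g` too. -/
lemma IsStableMatching.of_erase [DecidableEq E] {a : E → A} {b : E → B} {ra rb : E → R}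
    {H K : Finset E} {e g : E} (hK : IsStableMatching a b ra rb (H.erase g) K) (he : e ∈ H)
    (hetop : ∀ f ∈ H, a f = a e → ra f ≤ ra e) (hgb : b g = b e) (hge : rb g < rb e) :
    IsStableMatching a b ra rb H K := by
  obtain ⟨hKH, hK, habs⟩ := hK
  refine ⟨hKH.trans (erase_subset g H), hK, fun e' he' he'K => ?_⟩
  rcases eq_or_ne e' g with rfl | he'g
  · by_cases heK : e ∈ K
    · exact ⟨e, heK, Or.inr ⟨hgb.symm, hge⟩⟩
    obtain ⟨f, hfK, ⟨hfa, hef⟩ | ⟨hfb, hef⟩⟩ :=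
      habs e (mem_erase.mpr ⟨by rintro rfl; exact lt_irrefl _ hge, he⟩) heK
    · exact absurd hef (not_lt.mpr (hetop f (mem_of_mem_erase (hKH hfK)) hfa))
    · exact ⟨f, hfK, Or.inr ⟨hfb.trans hgb.symm, hge.trans hef⟩⟩
  · exact habs e' (mem_erase.mpr ⟨he'g, he'⟩) he'K

variable [DecidableEq A]

def degree (a : E → A) (F : Finset E) (x : A) : ℕ := #{e ∈ F | a e = x}

lemma degree_le_one_of_injOn {a : E → A} {M : Finset E} (hM : Set.InjOn a M) (x : A) :
    degree a M x ≤ 1 :=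
  card_le_one.mpr fun e he f hf => by
    rw [mem_filter] at he hf
    exact hM he.1 hf.1 (he.2.trans hf.2.symm)

lemma degree_pos_iff_mem_image {a : E → A} {M : Finset E} {x : A} :
    0 < degree a M x ↔ x ∈ M.image a := by
  simp [degree, card_pos, filter_nonempty_iff]

lemma degree_eq_degree_sdiff_add [DecidableEq E] (a : E → A) {F M : Finset E} (hMF : M ⊆ F)
    (x : A) : degree a F x = degree a (F \ M) x + degree a M x := by
  rw [degree, degree, degree, ← card_union_of_disjoint (disjoint_filter_filter sdiff_disjoint),
    ← filter_union, sdiff_union_of_subset hMF]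

def above (a : E → A) (r : E → R) (F : Finset E) (e : E) : Finset E :=
  {f ∈ F | a f = a e ∧ r e < r f}

lemma card_above_lt_degree (a : E → A) (r : E → R) {F : Finset E} {e : E} (he : e ∈ F) :
    #(above a r F e) < degree a F (a e) := by
  refine card_lt_card ((ssubset_iff_of_subset fun f hf => ?_).mpr
    ⟨e, mem_filter.mpr ⟨he, rfl⟩, fun h => lt_irrefl _ (mem_filter.mp h).2.2⟩)
  exact mem_filter.mpr ⟨(mem_filter.mp hf).1, (mem_filter.mp hf).2.1⟩

lemma above_eq_empty {a : E → A} {r : E → R} {F : Finset E} {e : E}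
    (h : ∀ f ∈ F, r f ≤ r e) :
    above a r F e = ∅ :=
  filter_eq_empty_iff.mpr fun f hf h' => not_lt.mpr (h f hf) h'.2

lemma card_above_ite_top_le [DecidableEq E] (a : E → A) (r : E → R) (t : R)
    {F M : Finset E} {e : E} (he : e ∉ M) :
    #(above a (fun f => if f ∈ M then t else r f) F e) ≤
      #(above a r (F \ M) e) + degree a M (a e) := by
  refine (card_le_card fun f hf => ?_).trans (card_union_le _ _)
  obtain ⟨hfF, hfa, hlt⟩ := mem_filter.mp hf
  by_cases hfM : f ∈ M
  · exact mem_union_right _ (mem_filter.mpr ⟨hfM, hfa⟩)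
  · simp only [he, hfM, if_false] at hlt
    exact mem_union_left _ (mem_filter.mpr ⟨mem_sdiff.mpr ⟨hfF, hfM⟩, hfa, hlt⟩)

lemma card_above_ite_bot_le [DecidableEq E] (a : E → A) (r : E → R) {s : R}
    {F M : Finset E} {e : E} (he : e ∉ M) (hs : s ≤ r e) :
    #(above a (fun f => if f ∈ M then s else r f) F e) ≤ #(above a r (F \ M) e) := by
  refine card_le_card fun f hf => ?_
  obtain ⟨hfF, hfa, hlt⟩ := mem_filter.mp hf
  by_cases hfM : f ∈ M
  · simp only [he, hfM, if_true, if_false] at hlt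
    exact absurd hs (not_le.mpr hlt)
  · simp only [he, hfM, if_false] at hlt
    exact mem_filter.mpr ⟨mem_sdiff.mpr ⟨hfF, hfM⟩, hfa, hlt⟩

lemma isStableMatching_top {a : E → A} {b : E → B} {ra rb : E → R} {H : Finset E}
    (hra : Set.InjOn (fun e => (a e, ra e)) H) (hrb : Set.InjOn (fun e => (b e, rb e)) H)
    (hbot : ∀ e ∈ H, (∀ f ∈ H, a f = a e → ra f ≤ ra e) →
      ∀ g ∈ H, b g = b e → rb e ≤ rb g) :
    IsStableMatching a b ra rb H {e ∈ H | ∀ f ∈ H, a f = a e → ra f ≤ ra e} := by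
  refine ⟨filter_subset _ _, fun k hk k' hk' hkk' => ?_, fun e he heT => ?_⟩
  · obtain ⟨hkH, hktop⟩ := mem_filter.mp hk
    obtain ⟨hk'H, hk'top⟩ := mem_filter.mp hk'
    refine ⟨fun hab => hkk' (hra hkH hk'H (Prod.ext hab ?_)),
      fun hbb => hkk' (hrb hkH hk'H (Prod.ext hbb ?_))⟩
    · exact le_antisymm (hk'top k hkH hab) (hktop k' hk'H hab.symm)
    · exact le_antisymm (hbot k hkH hktop k' hk'H hbb.symm) (hbot k' hk'H hk'top k hkH hbb)
  · obtain ⟨f, hf, hfmax⟩ :=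
      exists_max_image {f ∈ H | a f = a e} ra ⟨e, mem_filter.mpr ⟨he, rfl⟩⟩
    obtain ⟨hfH, hfa⟩ := mem_filter.mp hf
    have hfT : f ∈ {e ∈ H | ∀ f ∈ H, a f = a e → ra f ≤ ra e} :=
      mem_filter.mpr ⟨hfH, fun g hg hga => hfmax g (mem_filter.mpr ⟨hg, hga.trans hfa⟩)⟩
    have hef : ra e < ra f := lt_of_le_of_ne (hfmax e (mem_filter.mpr ⟨he, rfl⟩)) fun h =>
      heT (hra he hfH (Prod.ext hfa.symm h) ▸ hfT)
    exact ⟨f, hfT, Or.inl ⟨hfa, hef⟩⟩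

theorem exists_stable_matching (a : E → A) (b : E → B) (ra rb : E → R) (H : Finset E)
    (hra : Set.InjOn (fun e => (a e, ra e)) H) (hrb : Set.InjOn (fun e => (b e, rb e)) H) :
    ∃ K, IsStableMatching a b ra rb H K := by
  classical
  induction H using Finset.strongInduction with
  | H H ih =>
  by_cases hrej : ∃ e ∈ H, (∀ f ∈ H, a f = a e → ra f ≤ ra e) ∧
      ∃ g ∈ H, b g = b e ∧ rb g < rb e
  · obtain ⟨e, he, hetop, g, hgH, hgb, hge⟩ := hrej
    have hsub : ((H.erase g : Finset E) : Set E) ⊆ H := coe_subset.mpr (erase_subset g H)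
    obtain ⟨K, hK⟩ := ih (H.erase g) (erase_ssubset hgH) (hra.mono hsub) (hrb.mono hsub)
    exact ⟨K, hK.of_erase he hetop hgb hge⟩
  · push Not at hrej
    exact ⟨_, isStableMatching_top hra hrb hrej⟩

variable [DecidableEq B]

def neighbors (p : E → A) (q : E → B) (Γ : Finset E)
    (S : Finset A) : Finset B :=
  {e ∈ Γ | p e ∈ S}.image q

lemma neighbors_image (p : E → A) (q : E → B) (Γ : Finset E) :
    neighbors p q Γ (Γ.image p) = Γ.image q := by
  rw [neighbors, filter_true_of_mem fun e he => mem_image_of_mem p he]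

lemma card_le_card_neighbors_of_minimal {p : E → A} {q : E → B}
    {Γ : Finset E} {S : Finset A} (hcard : #(neighbors p q Γ S) ≤ #S)
    (hmin : ∀ S' ⊂ S, S'.Nonempty → #S' < #(neighbors p q Γ S'))
    {T : Finset B} (hT : T ⊆ neighbors p q Γ S) :
    #T ≤ #(neighbors q p {e ∈ Γ | p e ∈ S} T) := by
  by_contra! hlt
  set U := neighbors q p {e ∈ Γ | p e ∈ S} T
  have hUS : U ⊆ S := by
    intro x hx
    obtain ⟨e, he, rfl⟩ := mem_image.mp hx
    exact (mem_filter.mp (mem_filter.mp he).1).2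
  have hUne : U.Nonempty := by
    obtain ⟨y, hy⟩ := card_pos.mp (Nat.zero_lt_of_lt hlt)
    obtain ⟨e, he, rfl⟩ := mem_image.mp (hT hy)
    exact ⟨p e, mem_image_of_mem p (mem_filter.mpr ⟨he, hy⟩)⟩
  -- `S \ U` would be a smaller set with too few neighbours.
  have hN : neighbors p q Γ (S \ U) ⊆ neighbors p q Γ S \ T := by
    intro y hy
    obtain ⟨e, he, rfl⟩ := mem_image.mp hy
    obtain ⟨heΓ, hpe⟩ := mem_filter.mp he
    obtain ⟨hpS, hpU⟩ := mem_sdiff.mp hpe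
    refine mem_sdiff.mpr
      ⟨mem_image_of_mem q (mem_filter.mpr ⟨heΓ, hpS⟩), fun hqT => hpU ?_⟩
    exact mem_image_of_mem p (mem_filter.mpr ⟨mem_filter.mpr ⟨heΓ, hpS⟩, hqT⟩)
  have h1 := card_sdiff_of_subset hUS
  have h2 := card_le_card hN
  rw [card_sdiff_of_subset hT] at h2
  have h3 := card_le_card hT
  have := hmin (S \ U) (sdiff_ssubset hUS hUne) (card_pos.mp (by omega))
  omega

theorem exists_matching_image_eq_neighbors {p : E → A}
    {q : E → B} {Γ : Finset E} {S : Finset A} (hcard : #(neighbors p q Γ S) ≤ #S)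
    (hmin : ∀ S' ⊂ S, S'.Nonempty → #S' < #(neighbors p q Γ S')) :
    ∃ M ⊆ Γ, IsMatching p q M ∧ M.image p ⊆ S ∧ M.image q = neighbors p q Γ S := by
  classical
  set N := neighbors p q Γ S
  let t : N → Finset A := fun y => neighbors q p {e ∈ Γ | p e ∈ S} {y.1}
  have hall : ∀ T : Finset N, #T ≤ #(T.biUnion t) := by
    intro T
    have hT : T.biUnion t =
        neighbors q p {e ∈ Γ | p e ∈ S} (T.map (Function.Embedding.subtype _)) := by
      ext x
      simp only [t, neighbors, mem_biUnion, mem_image, mem_filter, mem_map, mem_singleton]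
      aesop
    rw [hT, ← card_map (Function.Embedding.subtype _)]
    refine card_le_card_neighbors_of_minimal hcard hmin fun y hy => ?_
    obtain ⟨y, -, rfl⟩ := mem_map.mp hy
    exact y.2
  obtain ⟨φ, hφ, hφt⟩ := (all_card_le_biUnion_card_iff_exists_injective t).mp hall
  have hed : ∀ y : N, ∃ e, ((e ∈ Γ ∧ p e ∈ S) ∧ q e = y) ∧ p e = φ y := fun y => by
    simpa [t, neighbors] using hφt y
  choose ed hed hedp using hed
  refine ⟨univ.image ed, fun e he => ?_, fun e he f hf hef => ?_, fun x hx => ?_, ?_⟩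
  · obtain ⟨y, -, rfl⟩ := mem_image.mp he
    exact (hed y).1.1
  · obtain ⟨y, -, rfl⟩ := mem_image.mp (mem_coe.mp he)
    obtain ⟨y', -, rfl⟩ := mem_image.mp (mem_coe.mp hf)
    have hyy' : y ≠ y' := fun h => hef (h ▸ rfl)
    rw [hedp, hedp, (hed y).2, (hed y').2]
    exact ⟨hφ.ne hyy', Subtype.val_injective.ne hyy'⟩
  · obtain ⟨e, he, rfl⟩ := mem_image.mp hx
    obtain ⟨y, -, rfl⟩ := mem_image.mp he
    exact (hed y).1.2
  · ext y
    refine ⟨fun hy => ?_, fun hy =>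
      mem_image.mpr ⟨ed ⟨y, hy⟩, mem_image_of_mem _ (mem_univ _), (hed _).2⟩⟩
    obtain ⟨e, he, rfl⟩ := mem_image.mp hy
    obtain ⟨y, -, rfl⟩ := mem_image.mp he
    exact (hed y).2 ▸ y.2

theorem exists_closed_matching_of_card_le (p : E → A) (q : E → B) {Γ : Finset E} (S : Finset A)
    (hS : S.Nonempty) (hSΓ : S ⊆ Γ.image p) (hcard : #(neighbors p q Γ S) ≤ #S) :
    ∃ M ⊆ Γ, M.Nonempty ∧ IsMatching p q M ∧
      ∀ f ∈ Γ, p f ∈ M.image p → q f ∈ M.image q := by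
  induction S using Finset.strongInduction with
  | H S ih =>
  by_cases hsmaller : ∃ S' ⊂ S, S'.Nonempty ∧ #(neighbors p q Γ S') ≤ #S'
  · obtain ⟨S', hS'S, hS', hcard'⟩ := hsmaller
    exact ih S' hS'S hS' (hS'S.subset.trans hSΓ) hcard'
  push Not at hsmaller
  obtain ⟨M, hMΓ, hM, hMp, hMq⟩ := exists_matching_image_eq_neighbors hcard hsmaller
  refine ⟨M, hMΓ, ?_, hM, fun f hf hpf =>
    hMq ▸ mem_image_of_mem q (mem_filter.mpr ⟨hf, hMp hpf⟩)⟩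
  obtain ⟨x, hx⟩ := hS
  obtain ⟨e, he, rfl⟩ := mem_image.mp (hSΓ hx)
  have : q e ∈ M.image q := hMq ▸ mem_image_of_mem q (mem_filter.mpr ⟨he, hx⟩)
  exact image_nonempty.mp ⟨_, this⟩

theorem exists_closed_matching (a : E → A) (b : E → B) {Γ : Finset E} (hΓ : Γ.Nonempty) :
    ∃ M ⊆ Γ, M.Nonempty ∧ IsMatching a b M ∧
      ((∀ f ∈ Γ, a f ∈ M.image a → b f ∈ M.image b) ∨
        (∀ f ∈ Γ, b f ∈ M.image b → a f ∈ M.image a)) := by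
  rcases le_total #(Γ.image b) #(Γ.image a) with h | h
  · obtain ⟨M, hMΓ, hM, hmatch, hclosed⟩ := exists_closed_matching_of_card_le a b (Γ.image a)
      (hΓ.image a) subset_rfl (by rwa [neighbors_image])
    exact ⟨M, hMΓ, hM, hmatch, Or.inl hclosed⟩
  · obtain ⟨M, hMΓ, hM, hmatch, hclosed⟩ := exists_closed_matching_of_card_le b a (Γ.image b)
      (hΓ.image b) subset_rfl (by rwa [neighbors_image])
    exact ⟨M, hMΓ, hM, hmatch.swap, Or.inr hclosed⟩

def IsPeelable (a : E → A) (b : E → B) (F M : Finset E) : Prop :=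
  M ⊆ F ∧ M.Nonempty ∧ IsMatching a b M ∧
    ∀ f ∈ F, a f ∈ M.image a → b f ∉ M.image b → degree b F (b f) < degree a F (a f)

lemma isPeelable_of_maxDegree {a : E → A} {b : E → B} {F M : Finset E} {Δ : ℕ}
    (hΔ : ∀ f ∈ F, degree b F (b f) ≤ Δ) (hMF : M ⊆ F) (hM : M.Nonempty)
    (hmatch : IsMatching a b M) (hMΔ : ∀ m ∈ M, degree a F (a m) = Δ)
    (hclosed : ∀ f ∈ F, degree a F (a f) = Δ → degree b F (b f) = Δ →
      a f ∈ M.image a → b f ∈ M.image b) :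
    IsPeelable a b F M := by
  refine ⟨hMF, hM, hmatch, fun f hf haf hbf => ?_⟩
  obtain ⟨m, hm, hma⟩ := mem_image.mp haf
  have hfΔ : degree a F (a f) = Δ := hma ▸ hMΔ m hm
  have hbΔ : degree b F (b f) ≠ Δ := fun h => hbf (hclosed f hf hfΔ h haf)
  have := hΔ f hf
  omega

theorem exists_peelable (a : E → A) (b : E → B) {F : Finset E} (hF : F.Nonempty) :
    ∃ M, IsPeelable a b F M ∨ IsPeelable b a F M := by
  set Δ := F.sup fun e => max (degree a F (a e)) (degree b F (b e)) with hΔdef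
  have hΔ : ∀ f ∈ F, degree a F (a f) ≤ Δ ∧ degree b F (b f) ≤ Δ := fun f hf =>
    max_le_iff.mp (le_sup (f := fun e => max (degree a F (a e)) (degree b F (b e))) hf)
  set Γ := {e ∈ F | degree a F (a e) = Δ ∧ degree b F (b e) = Δ}
  rcases Γ.eq_empty_or_nonempty with hΓ | hΓ
  · have hnone : ∀ f ∈ F, degree a F (a f) = Δ → degree b F (b f) ≠ Δ :=
      fun f hf ha hb => filter_eq_empty_iff.mp hΓ hf ⟨ha, hb⟩
    obtain ⟨e, he, hmax⟩ := exists_mem_eq_sup F hF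
      fun e => max (degree a F (a e)) (degree b F (b e))
    have hsingle : IsMatching a b {e} := by simp [IsMatching]
    refine ⟨{e}, (max_choice (degree a F (a e)) (degree b F (b e))).imp
      (fun h => ?_) (fun h => ?_)⟩
    · exact isPeelable_of_maxDegree (fun f hf => (hΔ f hf).2) (singleton_subset_iff.mpr he)
        (singleton_nonempty e) hsingle (by simp [hΔdef, hmax, h])
        fun f hf ha hb => absurd hb (hnone f hf ha)
    · exact isPeelable_of_maxDegree (fun f hf => (hΔ f hf).1) (singleton_subset_iff.mpr he)
        (singleton_nonempty e) hsingle.swap (by simp [hΔdef, hmax, h])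
        fun f hf hb ha => absurd hb (hnone f hf ha)
  · obtain ⟨M, hMΓ, hM, hmatch, hclosed⟩ := exists_closed_matching a b hΓ
    have hMF : M ⊆ F := hMΓ.trans (filter_subset _ _)
    refine ⟨M, hclosed.imp (fun hclosed => ?_) (fun hclosed => ?_)⟩
    · exact isPeelable_of_maxDegree (fun f hf => (hΔ f hf).2) hMF hM hmatch
        (fun m hm => (mem_filter.mp (hMΓ hm)).2.1)
        fun f hf ha hb => hclosed f (mem_filter.mpr ⟨hf, ha, hb⟩)
    · exact isPeelable_of_maxDegree (fun f hf => (hΔ f hf).1) hMF hM hmatch.swap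
        (fun m hm => (mem_filter.mp (hMΓ hm)).2.2)
        fun f hf hb ha => hclosed f (mem_filter.mpr ⟨hf, ha, hb⟩)

def IsDegreeBoundedRanking (a : E → A) (b : E → B) (ra rb : E → R) (F : Finset E) : Prop :=
  Set.InjOn (fun e => (a e, ra e)) F ∧ Set.InjOn (fun e => (b e, rb e)) F ∧
    ∀ e ∈ F, #(above a ra F e) + #(above b rb F e) < max (degree a F (a e)) (degree b F (b e))

lemma IsDegreeBoundedRanking.swap {a : E → A} {b : E → B} {ra rb : E → R} {F : Finset E}
    (h : IsDegreeBoundedRanking a b ra rb F) :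
    IsDegreeBoundedRanking b a rb ra F :=
  ⟨h.2.1, h.1, fun e he => by rw [add_comm, max_comm]; exact h.2.2 e he⟩

theorem IsDegreeBoundedRanking.of_isPeelable [DecidableEq E] {a : E → A} {b : E → B}
    {ra rb : E → ℤ} {F M : Finset E}
    (hpeel : IsPeelable a b F M) (h : IsDegreeBoundedRanking a b ra rb (F \ M)) :
    ∃ ra' rb' : E → ℤ, IsDegreeBoundedRanking a b ra' rb' F := by
  obtain ⟨hMF, -, hM, hcover⟩ := hpeel
  obtain ⟨hra, hrb, hout⟩ := h
  obtain ⟨N, hN⟩ := ((F \ M).image fun e => |ra e| + |rb e|).exists_le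
  have hbound : ∀ e ∈ F \ M, |ra e| < N + 1 ∧ |rb e| < N + 1 := fun e he => by
    have := hN _ (mem_image_of_mem _ he)
    constructor <;> linarith [abs_nonneg (ra e), abs_nonneg (rb e)]
  refine ⟨fun e => if e ∈ M then N + 1 else ra e, fun e => if e ∈ M then -(N + 1) else rb e,
    injOn_ite hM.injOn hra fun e he => (abs_lt.mp (hbound e he).1).2.ne,
    injOn_ite hM.swap.injOn hrb fun e he => (abs_lt.mp (hbound e he).2).1.ne', fun e he => ?_⟩
  by_cases heM : e ∈ M
  · rw [above_eq_empty fun f hf => ?_, card_empty, zero_add]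
    · exact (card_above_lt_degree b _ he).trans_le (le_max_right _ _)
    · by_cases hfM : f ∈ M
      · simp only [heM, hfM, if_true, le_refl]
      · have := abs_lt.mp (hbound f (mem_sdiff.mpr ⟨hf, hfM⟩)).1
        simp only [heM, hfM, if_true, if_false]
        linarith
  · have he' : e ∈ F \ M := mem_sdiff.mpr ⟨he, heM⟩
    have ha := card_above_ite_top_le a ra (N + 1) heM (F := F)
    have hb := card_above_ite_bot_le b rb heM (abs_lt.mp (hbound e he').2).1.le (F := F)
    have hda := degree_eq_degree_sdiff_add a hMF (a e)
    have hdb := degree_eq_degree_sdiff_add b hMF (b e)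
    have hMa := degree_le_one_of_injOn hM.injOn (a e)
    have hMb := degree_le_one_of_injOn hM.swap.injOn (b e)
    have hc : 0 < degree a M (a e) → degree b M (b e) = 0 →
        degree b F (b e) < degree a F (a e) := fun ha hb =>
      hcover e he (degree_pos_iff_mem_image.mp ha) fun h => (degree_pos_iff_mem_image.mpr h).ne' hb
    have := hout e he'
    omega

theorem exists_degreeBoundedRanking (a : E → A) (b : E → B) (F : Finset E) :
    ∃ ra rb : E → ℤ, IsDegreeBoundedRanking a b ra rb F := by
  classical
  induction F using Finset.strongInduction with
  | H F ih =>
  rcases F.eq_empty_or_nonempty with rfl | hF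
  · exact ⟨0, 0, by simp [IsDegreeBoundedRanking]⟩
  obtain ⟨M, hM | hM⟩ := exists_peelable a b hF
  · obtain ⟨ra, rb, h⟩ := ih (F \ M) (sdiff_ssubset hM.1 hM.2.1)
    exact h.of_isPeelable hM
  · obtain ⟨ra, rb, h⟩ := ih (F \ M) (sdiff_ssubset hM.1 hM.2.1)
    obtain ⟨rb', ra', h'⟩ := h.swap.of_isPeelable hM
    exact ⟨ra', rb', h'.swap⟩

theorem exists_listEdgeColoring {α : Type*} [Nonempty α] (a : E → A) (b : E → B)
    (F : Finset E) (L : E → Finset α)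
    (hL : ∀ e ∈ F, max (degree a F (a e)) (degree b F (b e)) ≤ #(L e)) :
    ∃ c : E → α, (∀ e ∈ F, c e ∈ L e) ∧
      (F : Set E).Pairwise fun e f => a e = a f ∨ b e = b f → c e ≠ c f := by
  classical
  obtain ⟨ra, rb, hra, hrb, hout⟩ := exists_degreeBoundedRanking a b F
  refine exists_listColoring_of_kernels (fun e f => a e = a f ∨ b e = b f)
    (fun e f => Outranks a b ra rb f e) F (fun H hH => ?_) L fun e he => ?_
  · obtain ⟨K, hKH, hK, habs⟩ := exists_stable_matching a b ra rb H
      (hra.mono (coe_subset.mpr hH)) (hrb.mono (coe_subset.mpr hH))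
    exact ⟨K, hKH, hK.imp fun _ _ h => not_or.mpr h, habs⟩
  calc #{f ∈ F | Outranks a b ra rb f e}
      ≤ #(above a ra F e ∪ above b rb F e) := card_le_card fun f hf => by
        obtain ⟨hfF, h | h⟩ := mem_filter.mp hf
        exacts [mem_union_left _ (mem_filter.mpr ⟨hfF, h⟩),
          mem_union_right _ (mem_filter.mpr ⟨hfF, h⟩)]
    _ ≤ #(above a ra F e) + #(above b rb F e) := card_union_le _ _
    _ < max (degree a F (a e)) (degree b F (b e)) := hout e he
    _ ≤ #(L e) := hL e he

end BipartiteListColoring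

theorem stmt18_general {V E : Type*} [Fintype E] [DecidableEq V]
    (ends : E → Sym2 V)
    (hbip : ∃ S : Set V, ∀ e : E, ∃ x ∈ S, ∃ y ∉ S, ends e = s(x, y))
    (L : E → Finset ℕ)
    (hL : ∀ (e : E) (x y : V), ends e = s(x, y) →
      max (Finset.univ.filter (fun e' => x ∈ ends e')).card
          (Finset.univ.filter (fun e' => y ∈ ends e')).card ≤ (L e).card) :
    ∃ c : E → ℕ, (∀ e, c e ∈ L e) ∧
      ∀ e f : E, e ≠ f → (∃ x, x ∈ ends e ∧ x ∈ ends f) → c e ≠ c f := by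
  obtain ⟨S, hS⟩ := hbip
  choose a ha b hb hab using hS
  have hside : ∀ e f, a e ≠ b f := fun e f h => hb f (h ▸ ha e)
  have hends : ∀ e x, x ∈ ends e ↔ a e = x ∨ b e = x := fun e x => by
    rw [hab e, Sym2.mem_iff, eq_comm, @eq_comm _ x]
  have hdeg_a : ∀ e, #{e' | a e ∈ ends e'} = BipartiteListColoring.degree a univ (a e) :=
    fun e =>
    congrArg card (filter_congr fun f _ => (hends f (a e)).trans (or_iff_left (hside e f ·.symm)))
  have hdeg_b : ∀ e, #{e' | b e ∈ ends e'} = BipartiteListColoring.degree b univ (b e) :=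
    fun e =>
    congrArg card (filter_congr fun f _ => (hends f (b e)).trans (or_iff_right (hside f e)))
  obtain ⟨c, hcL, hc⟩ := BipartiteListColoring.exists_listEdgeColoring a b univ L fun e _ => by
    simpa only [hdeg_a, hdeg_b] using hL e (a e) (b e) (hab e)
  refine ⟨c, fun e => hcL e (mem_univ e), fun e f hef ⟨x, hxe, hxf⟩ =>
    hc (mem_univ e) (mem_univ f) hef ?_⟩
  rw [hends] at hxe hxf
  rcases hxe with rfl | rfl <;> rcases hxf with h | h
  · exact Or.inl h.symm
  · exact absurd h.symm (hside e f)
  · exact absurd h (hside f e)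
  · exact Or.inr h.symm

/-- Theorem of Borodin, Kostochka, and Woodall: a bipartite multigraph (given by an
edge type `E` with an endpoint map into `Sym2 V`, every edge having one endpoint in
each side) is edge-`f`-choosable, where `f(e) = max{d(x), d(y)}` for `e = xy`.
Here `d(x)` is the number of edges incident to `x`. -/
theorem stmt18 {V E : Type*} [Fintype V] [Fintype E] [DecidableEq V]
    (ends : E → Sym2 V)
    (hbip : ∃ S : Set V, ∀ e : E, ∃ x ∈ S, ∃ y ∉ S, ends e = s(x, y))
    (L : E → Finset ℕ)
    (hL : ∀ (e : E) (x y : V), ends e = s(x, y) →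
      max (Finset.univ.filter (fun e' => x ∈ ends e')).card
          (Finset.univ.filter (fun e' => y ∈ ends e')).card ≤ (L e).card) :
    ∃ c : E → ℕ, (∀ e, c e ∈ L e) ∧
      ∀ e f : E, e ≠ f → (∃ x, x ∈ ends e ∧ x ∈ ends f) → c e ≠ c f :=
  stmt18_general ends hbip L hL
end
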